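/- arXiv:2412.16368 — 7 statements merged into one kernel-verified Lean document; each statement's English description precedes it below -/
import Mathlib

section
/- The number of interval-closed sets of the ordinal sum of antichains a₁ ⊕ a₂ ⊕ ⋯ ⊕ aₙ (where aᵢ denotes an antichain with aᵢ elements) equals 1 + Σ_{1≤i≤n} (2^{aᵢ} − 1) + Σ_{1≤i<j≤n} (2^{aᵢ} − 1)(2^{aⱼ} − 1). -/
/-!
A nonempty interval-closed set with lowest level `i` and highest level `j` consists of a nonempty
subset of level `i`, a nonempty subset of level `j` and the whole of every level strictly between
them; conversely any such choice is interval-closed. For `i = j` this is one nonempty subset of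
level `i`, for `i < j` the two end subsets are independent, which gives the three terms
`1`, `2 ^ aᵢ - 1` and `(2 ^ aᵢ - 1) (2 ^ aⱼ - 1)`.
-/

open Finset Function

theorem Fintype.card_nonempty_finset (β : Type*) [Fintype β] :
    Fintype.card {s : Finset β // s.Nonempty} = 2 ^ Fintype.card β - 1 := by
  classical
  rw [Fintype.card_congr (Equiv.subtypeEquivRight fun _ => nonempty_iff_ne_empty),
    Fintype.card_subtype_compl, Fintype.card_subtype_eq, Fintype.card_finset]

namespace OrdinalSumAntichains

variable {ι : Type*} [LinearOrder ι] {α : ι → Type*}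

/-- The ordinal sum of the antichains `α i` lives on `Σ i, α i`, with `x < z ↔ x.1 < z.1`. -/
def IsIntervalClosed (I : Finset (Σ i, α i)) : Prop :=
  ∀ x ∈ I, ∀ y ∈ I, ∀ z : Σ i, α i, x.1 < z.1 → z.1 < y.1 → z ∈ I

variable [∀ i, Fintype (α i)]

def FullBetweenOccupied (f : ∀ i, Finset (α i)) : Prop :=
  ∀ ⦃i k j : ι⦄, i < k → k < j → (f i).Nonempty → (f j).Nonempty → f k = univ

theorem isIntervalClosed_sigma_iff [Fintype ι] {f : ∀ i, Finset (α i)} :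
    IsIntervalClosed (univ.sigma f) ↔ FullBetweenOccupied f := by
  constructor
  · rintro hI i k j hik hkj ⟨v, hv⟩ ⟨w, hw⟩
    refine eq_univ_of_forall fun u => ?_
    simpa using hI ⟨i, v⟩ (by simpa using hv) ⟨j, w⟩ (by simpa using hw) ⟨k, u⟩ hik hkj
  · intro hf x hx y hy z hxz hzy
    rw [mem_sigma] at hx hy ⊢
    exact ⟨mem_univ _, hf hxz hzy ⟨_, hx.2⟩ ⟨_, hy.2⟩ ▸ mem_univ _⟩

noncomputable def fibersEquiv [Fintype ι] : Finset (Σ i, α i) ≃ ∀ i, Finset (α i) where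
  toFun I i := I.preimage (Sigma.mk i) sigma_mk_injective.injOn
  invFun f := univ.sigma f
  left_inv I := I.sigma_preimage_mk_of_subset (subset_univ _)
  right_inv f := by ext i v; simp

section Block

variable {i j k : ι} {s : Finset (α i)} {t : Finset (α j)}

/-- When `i = j` the subset `t` overrides `s`. -/
def block (i j : ι) (s : Finset (α i)) (t : Finset (α j)) : ∀ k, Finset (α k) :=
  update (update (fun k => if i < k ∧ k < j then univ else ∅) i s) j t

theorem block_apply_right : block i j s t j = t := update_self ..

theorem block_apply_left (hij : i ≠ j) : block i j s t i = s := by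
  rw [block, update_of_ne hij, update_self]

theorem block_apply_of_ne (hki : k ≠ i) (hkj : k ≠ j) :
    block i j s t k = if i < k ∧ k < j then univ else ∅ := by
  rw [block, update_of_ne hkj, update_of_ne hki]

theorem block_left_nonempty (hs : s.Nonempty) (ht : t.Nonempty) :
    (block i j s t i).Nonempty := by
  rcases eq_or_ne i j with rfl | hij
  · rwa [block_apply_right]
  · rwa [block_apply_left hij]

theorem le_and_le_of_block_nonempty (hij : i ≤ j) (hk : (block i j s t k).Nonempty) :
    i ≤ k ∧ k ≤ j := by
  rcases eq_or_ne k i with rfl | hki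
  · exact ⟨le_rfl, hij⟩
  rcases eq_or_ne k j with rfl | hkj
  · exact ⟨hij, le_rfl⟩
  rw [block_apply_of_ne hki hkj] at hk
  split_ifs at hk with h
  · exact ⟨h.1.le, h.2.le⟩
  · simp at hk

theorem fullBetweenOccupied_block (hij : i ≤ j) : FullBetweenOccupied (block i j s t) := by
  intro a k b hak hkb ha hb
  have hik := (le_and_le_of_block_nonempty hij ha).1.trans_lt hak
  have hkj := hkb.trans_le (le_and_le_of_block_nonempty hij hb).2
  rw [block_apply_of_ne hik.ne' hkj.ne, if_pos ⟨hik, hkj⟩]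

theorem block_eq {f : ∀ k, Finset (α k)}
    (hin : ∀ k, i < k → k < j → f k = univ) (hout : ∀ k, (f k).Nonempty → i ≤ k ∧ k ≤ j) :
    block i j (f i) (f j) = f := by
  funext k
  rcases eq_or_ne k j with rfl | hkj
  · exact block_apply_right
  rcases eq_or_ne k i with rfl | hki
  · exact block_apply_left hkj
  rw [block_apply_of_ne hki hkj]
  split_ifs with h
  · exact (hin k h.1 h.2).symm
  · refine (not_nonempty_iff_eq_empty.1 fun hk => h ?_).symm
    obtain ⟨hik, hkj'⟩ := hout k hk
    exact ⟨hik.lt_of_ne' hki, hkj'.lt_of_ne hkj⟩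

theorem eq_and_eq_of_block_eq {i' j' : ι} {s' : Finset (α i')} {t' : Finset (α j')}
    (hij : i ≤ j) (hij' : i' ≤ j') (hs : s.Nonempty) (ht : t.Nonempty) (hs' : s'.Nonempty)
    (ht' : t'.Nonempty) (h : block i j s t = block i' j' s' t') : i = i' ∧ j = j' := by
  have hi : i' ≤ i ∧ i ≤ j' := le_and_le_of_block_nonempty hij' (h ▸ block_left_nonempty hs ht)
  have hi' : i ≤ i' ∧ i' ≤ j := le_and_le_of_block_nonempty hij (h ▸ block_left_nonempty hs' ht')
  have hj : i' ≤ j ∧ j ≤ j' := le_and_le_of_block_nonempty hij' (by rwa [← h, block_apply_right])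
  have hj' : i ≤ j' ∧ j' ≤ j := le_and_le_of_block_nonempty hij (by rwa [h, block_apply_right])
  exact ⟨le_antisymm hi'.1 hi.1, le_antisymm hj.2 hj'.2⟩

end Block

variable (α) in
abbrev Shape : Type _ :=
  Unit ⊕ (Σ i, {s : Finset (α i) // s.Nonempty}) ⊕
    Σ p : {p : ι × ι // p.1 < p.2}, {s : Finset (α p.1.1) // s.Nonempty} ×
      {t : Finset (α p.1.2) // t.Nonempty}

def Shape.fibers : Shape α → ∀ k, Finset (α k) :=
  Sum.elim (fun _ _ => ∅) <| Sum.elim (fun ⟨i, s⟩ => block i i s.1 s.1)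
    fun ⟨⟨(i, j), _⟩, s, t⟩ => block i j s.1 t.1

theorem Shape.fullBetweenOccupied_fibers (d : Shape α) : FullBetweenOccupied d.fibers := by
  rcases d with _ | ⟨i, s⟩ | ⟨⟨⟨i, j⟩, hij⟩, s, t⟩
  · intro _ _ _ _ _ h
    exact absurd h not_nonempty_empty
  · exact fullBetweenOccupied_block le_rfl
  · exact fullBetweenOccupied_block hij.le

theorem Shape.fibers_injective : Injective (Shape.fibers (α := α)) := by
  refine Injective.sumElim (injective_of_subsingleton _) (Injective.sumElim ?_ ?_ ?_) ?_
  · rintro ⟨i, s⟩ ⟨i', s'⟩ h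
    obtain ⟨rfl, -⟩ := eq_and_eq_of_block_eq le_rfl le_rfl s.2 s.2 s'.2 s'.2 h
    have hs : block i i s.1 s.1 i = block i i s'.1 s'.1 i := congrFun h i
    rw [block_apply_right, block_apply_right] at hs
    rw [Subtype.ext hs]
  · rintro ⟨⟨⟨i, j⟩, hij⟩, s, t⟩ ⟨⟨⟨i', j'⟩, hij'⟩, s', t'⟩ h
    obtain ⟨rfl, rfl⟩ := eq_and_eq_of_block_eq hij.le hij'.le s.2 t.2 s'.2 t'.2 h
    have hs : block i j s.1 t.1 i = block i j s'.1 t'.1 i := congrFun h i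
    have ht : block i j s.1 t.1 j = block i j s'.1 t'.1 j := congrFun h j
    rw [block_apply_left hij.ne, block_apply_left hij.ne] at hs
    rw [block_apply_right, block_apply_right] at ht
    rw [Subtype.ext hs, Subtype.ext ht]
  · rintro ⟨i, s⟩ ⟨⟨⟨i', j'⟩, hij'⟩, s', t'⟩ h
    obtain ⟨rfl, rfl⟩ := eq_and_eq_of_block_eq le_rfl hij'.le s.2 s.2 s'.2 t'.2 h
    exact lt_irrefl _ hij'
  · rintro ⟨⟩ (⟨i, s⟩ | ⟨⟨⟨i, j⟩, hij⟩, s, t⟩) h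
    · exact s.2.ne_empty (block_apply_right.symm.trans (congrFun h i).symm)
    · exact t.2.ne_empty (block_apply_right.symm.trans (congrFun h j).symm)

theorem Shape.exists_fibers_eq [Finite ι] {f : ∀ k, Finset (α k)} (hf : FullBetweenOccupied f) :
    ∃ d : Shape α, d.fibers = f := by
  by_cases hocc : ∃ k, (f k).Nonempty
  · have : Nonempty {k // (f k).Nonempty} := nonempty_subtype.2 hocc
    obtain ⟨⟨i, hi⟩, hmin⟩ := Finite.exists_min (Subtype.val : {k // (f k).Nonempty} → ι)
    obtain ⟨⟨j, hj⟩, hmax⟩ := Finite.exists_max (Subtype.val : {k // (f k).Nonempty} → ι)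
    have hblock : block i j (f i) (f j) = f :=
      block_eq (fun k hik hkj => hf hik hkj hi hj) fun k hk => ⟨hmin ⟨k, hk⟩, hmax ⟨k, hk⟩⟩
    rcases (hmin ⟨j, hj⟩).eq_or_lt with rfl | hij
    · exact ⟨.inr (.inl ⟨i, f i, hi⟩), hblock⟩
    · exact ⟨.inr (.inr ⟨⟨(i, j), hij⟩, ⟨f i, hi⟩, ⟨f j, hj⟩⟩), hblock⟩
  · simp only [not_exists, not_nonempty_iff_eq_empty] at hocc
    exact ⟨.inl (), funext fun k => (hocc k).symm⟩

theorem Shape.card [Fintype ι] :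
    Nat.card (Shape α) = 1 + ∑ i, (2 ^ Fintype.card (α i) - 1) +
      ∑ p ∈ univ.filter (fun p : ι × ι => p.1 < p.2),
        (2 ^ Fintype.card (α p.1) - 1) * (2 ^ Fintype.card (α p.2) - 1) := by
  rw [Nat.card_eq_fintype_card, Fintype.card_sum, Fintype.card_sum, ← add_assoc, Fintype.card_unit,
    Fintype.card_sigma, Fintype.card_sigma,
    sum_subtype (F := inferInstance) (univ.filter fun p : ι × ι => p.1 < p.2) fun _ =>
      mem_filter_univ _]
  simp only [Fintype.card_prod, Fintype.card_nonempty_finset]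

theorem card_isIntervalClosed [Fintype ι] :
    Nat.card {I : Finset (Σ i, α i) // IsIntervalClosed I} = 1 + ∑ i, (2 ^ Fintype.card (α i) - 1) +
      ∑ p ∈ univ.filter (fun p : ι × ι => p.1 < p.2),
        (2 ^ Fintype.card (α p.1) - 1) * (2 ^ Fintype.card (α p.2) - 1) := by
  rw [← Shape.card, ← Nat.card_congr
    (fibersEquiv.symm.subtypeEquiv fun _ => isIntervalClosed_sigma_iff.symm)]
  exact (Nat.card_eq_of_bijective (fun d => ⟨d.fibers, d.fullBetweenOccupied_fibers⟩)
    ⟨fun _ _ h => Shape.fibers_injective (congrArg Subtype.val h),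
      fun f => (Shape.exists_fibers_eq f.2).imp fun _ => Subtype.ext⟩).symm

end OrdinalSumAntichains

/-- The number of interval-closed sets of the ordinal sum of antichains
`a₁ ⊕ ⋯ ⊕ aₙ`. The poset has elements `Σ i : Fin n, Fin (a i)`, with the strict
order `x < z` iff `x.1 < z.1` (elements within one antichain are incomparable). -/
theorem card_ics_ordinal_sum_antichains (n : ℕ) (a : Fin n → ℕ) :
    Nat.card {I : Finset (Σ i : Fin n, Fin (a i)) //
        ∀ x ∈ I, ∀ y ∈ I, ∀ z : Σ i : Fin n, Fin (a i),
          x.1 < z.1 → z.1 < y.1 → z ∈ I} =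
      1 + (∑ i : Fin n, (2 ^ (a i) - 1)) +
        ∑ p ∈ Finset.univ.filter (fun p : Fin n × Fin n => p.1 < p.2),
          (2 ^ (a p.1) - 1) * (2 ^ (a p.2) - 1) := by
  have h := OrdinalSumAntichains.card_isIntervalClosed (α := fun i : Fin n => Fin (a i))
  simp only [Fintype.card_fin] at h
  exact h
end

section
/- The number of interval-closed sets of the product of chains [2] × [n] is 1 + n + n² + ((n+1)/2)·binomial(n+2, 3), which equals (n⁴ + 4n³ + 17n² + 14n + 12)/12. -/
/-- A subset `I` of a poset is interval-closed if for all `x, y ∈ I` and `z`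
with `x < z < y`, we have `z ∈ I`. -/
def IsIntervalClosed {P : Type*} [PartialOrder P] (I : Finset P) : Prop :=
  ∀ x ∈ I, ∀ y ∈ I, ∀ z : P, x < z → z < y → z ∈ I

/-!
Interval-closed sets are exactly the order-convex ones. A subset of `Fin 2 × α` is a pair of rows,
`A` at the bottom and `B` on top, and it is order-convex iff both rows are and every `a ∈ A`,
`b ∈ B` with `a ≤ b` satisfy `a ∈ B` and `b ∈ A`. For nonempty rows `A = [a₁, a₂]` and
`B = [b₁, b₂]` this means `b₁ ≤ a₁` and `b₂ ≤ a₂`. Hence the count is `1` (empty set)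
`+ 2 · #intervals` (one row empty) `+ #{(a, b) : b ≤ a componentwise}`. For `α = Fin n` the last
term splits according to whether `a₁ ≤ b₂`, giving the chains `b₁ ≤ a₁ ≤ b₂ ≤ a₂` and
`b₁ ≤ b₂ < a₁ ≤ a₂`; iterated hockey-stick sums count these as `C(n+3, 4)` and `C(n+2, 4)`, and
`2 (C(n+3, 4) + C(n+2, 4)) = (n + 1) C(n+2, 3)`.
-/

open Finset

theorem isIntervalClosed_iff_ordConnected {P : Type*} [PartialOrder P] {I : Finset P} :
    IsIntervalClosed I ↔ (I : Set P).OrdConnected := by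
  refine ⟨fun h => ⟨fun x hx y hy z hz => ?_⟩,
    fun h x hx y hy z hxz hzy => h.out hx hy ⟨hxz.le, hzy.le⟩⟩
  rcases hz.1.eq_or_lt with rfl | hxz
  · exact hx
  rcases hz.2.eq_or_lt with rfl | hzy
  · exact hy
  exact h x hx y hy z hxz hzy

section TwoRows

variable {α : Type*} [DecidableEq α]

def twoRows (A B : Finset α) : Finset (Fin 2 × α) := {0} ×ˢ A ∪ {1} ×ˢ B

@[simp]
theorem mem_twoRows {A B : Finset α} {x : Fin 2 × α} :
    x ∈ twoRows A B ↔ x.1 = 0 ∧ x.2 ∈ A ∨ x.1 = 1 ∧ x.2 ∈ B := by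
  simp only [twoRows, mem_union, mem_product, mem_singleton]

noncomputable def twoRowsEquiv : Finset α × Finset α ≃ Finset (Fin 2 × α) where
  toFun p := twoRows p.1 p.2
  invFun I := (I.preimage (Prod.mk 0) (Prod.mk_right_injective 0).injOn,
    I.preimage (Prod.mk 1) (Prod.mk_right_injective 1).injOn)
  left_inv p := by ext <;> simp
  right_inv I := by
    ext ⟨i, c⟩
    fin_cases i <;> simp

def RowsCompatible [LE α] (A B : Finset α) : Prop :=
  ∀ a ∈ A, ∀ b ∈ B, a ≤ b → a ∈ B ∧ b ∈ A

instance [LE α] [DecidableLE α] : DecidableRel (RowsCompatible (α := α)) := fun A B => by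
  unfold RowsCompatible
  infer_instance

theorem ordConnected_twoRows_iff [Preorder α] {A B : Finset α} :
    (twoRows A B : Set (Fin 2 × α)).OrdConnected ↔
      (A : Set α).OrdConnected ∧ (B : Set α).OrdConnected ∧ RowsCompatible A B := by
  constructor
  · intro h
    have mem (x : Fin 2 × α) (hx : x ∈ twoRows A B) (y : Fin 2 × α) (hy : y ∈ twoRows A B)
        (z : Fin 2 × α) (hxz : x ≤ z) (hzy : z ≤ y) : z ∈ twoRows A B :=
      h.out hx hy ⟨hxz, hzy⟩
    refine ⟨⟨fun a ha b hb c hc => ?_⟩, ⟨fun a ha b hb c hc => ?_⟩,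
      fun a ha b hb hab => ⟨?_, ?_⟩⟩
    · simpa using mem (0, a) (by simpa) (0, b) (by simpa) (0, c) ⟨le_rfl, hc.1⟩ ⟨le_rfl, hc.2⟩
    · simpa using mem (1, a) (by simpa) (1, b) (by simpa) (1, c) ⟨le_rfl, hc.1⟩ ⟨le_rfl, hc.2⟩
    · simpa using mem (0, a) (by simpa) (1, b) (by simpa) (1, a) ⟨zero_le_one, le_rfl⟩ ⟨le_rfl, hab⟩
    · simpa using mem (0, a) (by simpa) (1, b) (by simpa) (0, b) ⟨le_rfl, hab⟩ ⟨zero_le_one, le_rfl⟩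
  · rintro ⟨hA, hB, hAB⟩
    refine ⟨fun ⟨i, a⟩ hx ⟨j, b⟩ hy ⟨k, c⟩ ⟨⟨hik, hac⟩, ⟨hkj, hcb⟩⟩ => ?_⟩
    simp only [mem_coe, mem_twoRows] at hx hy ⊢
    fin_cases i <;> fin_cases j <;> fin_cases k <;> simp_all
    · exact hA.out hx hy ⟨hac, hcb⟩
    · exact hA.out hx (hAB a hx b hy (hac.trans hcb)).2 ⟨hac, hcb⟩
    · exact hB.out (hAB a hx b hy (hac.trans hcb)).1 hy ⟨hac, hcb⟩
    · exact hB.out hx hy ⟨hac, hcb⟩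

end TwoRows

section Intervals

variable {α : Type*} [LinearOrder α] [LocallyFiniteOrder α]

theorem rowsCompatible_Icc_iff {a₁ a₂ b₁ b₂ : α} (ha : a₁ ≤ a₂) (hb : b₁ ≤ b₂) :
    RowsCompatible (Icc a₁ a₂) (Icc b₁ b₂) ↔ b₁ ≤ a₁ ∧ b₂ ≤ a₂ := by
  simp only [RowsCompatible, mem_Icc]
  constructor
  · intro h
    rcases le_or_gt a₁ b₂ with h12 | h21
    · obtain ⟨⟨h1, -⟩, -, h2⟩ := h a₁ ⟨le_rfl, ha⟩ b₂ ⟨hb, le_rfl⟩ h12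
      exact ⟨h1, h2⟩
    · exact ⟨hb.trans h21.le, h21.le.trans ha⟩
  · rintro ⟨h1, h2⟩ a ⟨ha1, ha2⟩ b ⟨hb1, hb2⟩ hab
    exact ⟨⟨h1.trans ha1, hab.trans hb2⟩, ⟨ha1.trans hab, hb2.trans h2⟩⟩

variable [Fintype α]

variable (α) in
def intervalBounds : Finset (α × α) := {p | p.1 ≤ p.2}

variable (α) in
def nonemptyIntervals : Finset (Finset α) := (intervalBounds α).image fun p => Icc p.1 p.2

theorem injOn_Icc_intervalBounds :
    Set.InjOn (fun p : α × α => Icc p.1 p.2) (intervalBounds α) := by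
  intro p hp q _ hpq
  have := (Set.Icc_eq_Icc_iff (by simpa [intervalBounds] using hp)).1
    (by simpa [← coe_Icc] using congrArg ((↑) : Finset α → Set α) hpq)
  exact Prod.ext this.1 this.2

theorem card_nonemptyIntervals : #(nonemptyIntervals α) = #(intervalBounds α) :=
  card_image_of_injOn injOn_Icc_intervalBounds

theorem empty_notMem_nonemptyIntervals : ∅ ∉ nonemptyIntervals α := by
  simp [nonemptyIntervals, intervalBounds]

theorem ordConnected_coe_iff_eq_empty_or_mem_nonemptyIntervals {s : Finset α} :
    (s : Set α).OrdConnected ↔ s = ∅ ∨ s ∈ nonemptyIntervals α := by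
  constructor
  · intro h
    rcases s.eq_empty_or_nonempty with rfl | hs
    · exact Or.inl rfl
    refine Or.inr (mem_image.2 ⟨(s.min' hs, s.max' hs),
      by simpa [intervalBounds] using s.min'_le _ (s.max'_mem hs), ?_⟩)
    ext c
    exact ⟨fun hc => h.out (s.min'_mem hs) (s.max'_mem hs) (by simpa using hc),
      fun hc => mem_Icc.2 ⟨s.min'_le c hc, s.le_max' c hc⟩⟩
  · rintro (rfl | h)
    · simpa using Set.ordConnected_empty
    · obtain ⟨p, -, rfl⟩ := mem_image.1 h
      rw [coe_Icc]
      exact Set.ordConnected_Icc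

theorem card_isIntervalClosed_eq_card_rowsCompatible :
    Nat.card {I : Finset (Fin 2 × α) // IsIntervalClosed I} =
      #{p ∈ insert ∅ (nonemptyIntervals α) ×ˢ insert ∅ (nonemptyIntervals α) |
        RowsCompatible p.1 p.2} := by
  rw [← Nat.card_eq_finsetCard]
  refine Nat.card_congr (twoRowsEquiv.subtypeEquiv fun p => ?_).symm
  rw [mem_filter, mem_product, mem_insert, mem_insert,
    ← ordConnected_coe_iff_eq_empty_or_mem_nonemptyIntervals,
    ← ordConnected_coe_iff_eq_empty_or_mem_nonemptyIntervals,
    isIntervalClosed_iff_ordConnected, and_assoc]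
  exact ordConnected_twoRows_iff.symm

theorem card_filter_rowsCompatible :
    #{p ∈ insert ∅ (nonemptyIntervals α) ×ˢ insert ∅ (nonemptyIntervals α) |
        RowsCompatible p.1 p.2} =
      1 + 2 * #(nonemptyIntervals α) +
        #{x ∈ intervalBounds α ×ˢ intervalBounds α | x.2 ≤ x.1} := by
  have empty_left (B : Finset α) : RowsCompatible ∅ B := by simp [RowsCompatible]
  have empty_right (A : Finset α) : RowsCompatible A ∅ := by simp [RowsCompatible]
  have both : ∑ A ∈ nonemptyIntervals α, ∑ B ∈ nonemptyIntervals α,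
      (if RowsCompatible A B then 1 else 0) =
        #{x ∈ intervalBounds α ×ˢ intervalBounds α | x.2 ≤ x.1} := by
    rw [card_filter, sum_product, nonemptyIntervals, sum_image injOn_Icc_intervalBounds]
    refine sum_congr rfl fun p hp => ?_
    rw [sum_image injOn_Icc_intervalBounds]
    refine sum_congr rfl fun q hq => ?_
    simp only [intervalBounds, mem_filter, mem_univ, true_and] at hp hq
    simp only [rowsCompatible_Icc_iff hp hq, Prod.le_def]
  simp only [card_filter, sum_product, sum_insert empty_notMem_nonemptyIntervals, empty_left,
    empty_right, if_true, sum_add_distrib, both, ← card_eq_sum_ones]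
  ring

theorem card_isIntervalClosed_fin_two_prod :
    Nat.card {I : Finset (Fin 2 × α) // IsIntervalClosed I} =
      1 + 2 * #(intervalBounds α) + #{x ∈ intervalBounds α ×ˢ intervalBounds α | x.2 ≤ x.1} := by
  rw [card_isIntervalClosed_eq_card_rowsCompatible, card_filter_rowsCompatible,
    card_nonemptyIntervals]

end Intervals

theorem Nat.sum_range_add_choose_of_le {j k : ℕ} (h : j ≤ k) (m : ℕ) :
    ∑ i ∈ range m, (i + j).choose k = (m + j).choose (k + 1) := by
  induction m with
  | zero => simp [Nat.choose_eq_zero_of_lt (by omega : j < k + 1)]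
  | succ m ih => rw [sum_range_succ, ih, Nat.add_right_comm, Nat.choose_succ_succ', add_comm]

namespace Fin

variable {n j k : ℕ}

theorem sum_Iio_add_choose (hjk : j ≤ k) (d : Fin n) :
    ∑ c ∈ Iio d, ((c : ℕ) + j).choose k = ((d : ℕ) + j).choose (k + 1) := by
  rw [← Nat.sum_range_add_choose_of_le hjk, ← Nat.Iio_eq_range, ← map_valEmbedding_Iio, sum_map]
  rfl

theorem sum_Iic_add_choose (hjk : j ≤ k) (d : Fin n) :
    ∑ c ∈ Iic d, ((c : ℕ) + j).choose k = ((d : ℕ) + 1 + j).choose (k + 1) := by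
  rw [← Nat.sum_range_add_choose_of_le hjk, Nat.range_succ_eq_Iic, ← map_valEmbedding_Iic,
    sum_map]
  rfl

theorem sum_univ_add_choose (hjk : j ≤ k) :
    ∑ c : Fin n, ((c : ℕ) + j).choose k = (n + j).choose (k + 1) := by
  rw [sum_univ_eq_sum_range (fun i => (i + j).choose k), Nat.sum_range_add_choose_of_le hjk]

theorem card_le_pairs : #{x : Fin n × Fin n | x.2 ≤ x.1} = (n + 1).choose 2 := by
  calc _ = ∑ a : Fin n, ((a : ℕ) + 1).choose 1 := by
          simp only [card_filter, Fintype.sum_prod_type]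
          simp [filter_ge_eq_Iic]
    _ = _ := sum_univ_add_choose le_rfl

theorem card_le_le_le :
    #{x : Fin n × Fin n × Fin n × Fin n | x.2.1 ≤ x.1 ∧ x.2.2.1 ≤ x.2.1 ∧ x.2.2.2 ≤ x.2.2.1} =
      (n + 3).choose 4 := by
  calc _ = ∑ a : Fin n, ∑ b ∈ Iic a, ∑ c ∈ Iic b, ((c : ℕ) + 1).choose 1 := by
          simp only [card_filter, Fintype.sum_prod_type, ite_and, sum_ite_irrel, sum_const_zero]
          simp [← sum_filter, filter_ge_eq_Iic]
    _ = _ := by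
          simp (disch := omega) only [sum_Iic_add_choose, sum_univ_add_choose, add_assoc,
            Nat.reduceAdd]

theorem card_le_lt_le :
    #{x : Fin n × Fin n × Fin n × Fin n | x.2.1 ≤ x.1 ∧ x.2.2.1 < x.2.1 ∧ x.2.2.2 ≤ x.2.2.1} =
      (n + 2).choose 4 := by
  calc _ = ∑ a : Fin n, ∑ b ∈ Iic a, ∑ c ∈ Iio b, ((c : ℕ) + 1).choose 1 := by
          simp only [card_filter, Fintype.sum_prod_type, ite_and, sum_ite_irrel, sum_const_zero]
          simp [← sum_filter, filter_ge_eq_Iic, filter_gt_eq_Iio]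
    _ = _ := by
          simp (disch := omega) only [sum_Iic_add_choose, sum_Iio_add_choose, sum_univ_add_choose,
            add_assoc, Nat.reduceAdd]

end Fin

section FinCount

variable {n : ℕ}

theorem card_intervalBounds_fin : #(intervalBounds (Fin n)) = (n + 1).choose 2 := by
  rw [← Fin.card_le_pairs]
  exact card_equiv (Equiv.prodComm _ _) (by simp [intervalBounds])

theorem two_mul_card_intervalBounds_le_fin :
    2 * #{x ∈ intervalBounds (Fin n) ×ˢ intervalBounds (Fin n) | x.2 ≤ x.1} =
      (n + 1) * (n + 2).choose 3 := by
  rw [← card_filter_add_card_filter_not (p := fun x => x.1.1 ≤ x.2.2)]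
  have chain_le : #{x ∈ {x ∈ intervalBounds (Fin n) ×ˢ intervalBounds (Fin n) | x.2 ≤ x.1} |
      x.1.1 ≤ x.2.2} = (n + 3).choose 4 := by
    rw [← Fin.card_le_le_le]
    refine (card_equiv ⟨fun x => ((x.2.2.1, x.1), (x.2.2.2, x.2.1)),
      fun y => (y.1.2, y.2.2, y.1.1, y.2.1), fun _ => rfl, fun _ => rfl⟩ fun x => ?_).symm
    simp only [mem_filter, mem_univ, true_and, intervalBounds, Equiv.coe_fn_mk, mem_product,
      Prod.mk_le_mk]
    grind
  have chain_lt : #{x ∈ {x ∈ intervalBounds (Fin n) ×ˢ intervalBounds (Fin n) | x.2 ≤ x.1} |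
      ¬x.1.1 ≤ x.2.2} = (n + 2).choose 4 := by
    rw [← Fin.card_le_lt_le]
    refine (card_equiv ⟨fun x => ((x.2.1, x.1), (x.2.2.2, x.2.2.1)),
      fun y => (y.1.2, y.1.1, y.2.2, y.2.1), fun _ => rfl, fun _ => rfl⟩ fun x => ?_).symm
    simp only [mem_filter, mem_univ, true_and, not_le, intervalBounds, Equiv.coe_fn_mk,
      mem_product, Prod.mk_le_mk]
    grind
  have pascal := Nat.choose_succ_succ' (n + 2) 3
  have absorb := Nat.add_one_mul_choose_eq (n + 2) 3
  rw [chain_le, chain_lt]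
  nlinarith

end FinCount

/-- The number of interval-closed sets of `[2] × [n]` is
`1 + n + n² + ((n+1)/2)·C(n+2,3) = (n⁴ + 4n³ + 17n² + 14n + 12)/12`
(both identities stated with denominators cleared). -/
theorem card_ics_two_times_n (n : ℕ) :
    12 * Nat.card {I : Finset (Fin 2 × Fin n) // IsIntervalClosed I} =
        n ^ 4 + 4 * n ^ 3 + 17 * n ^ 2 + 14 * n + 12 ∧
      2 * Nat.card {I : Finset (Fin 2 × Fin n) // IsIntervalClosed I} =
        2 * (1 + n + n ^ 2) + (n + 1) * (n + 2).choose 3 := by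
  have choose_two : 2 * (n + 1).choose 2 = n * (n + 1) := by
    have := Nat.add_one_mul_choose_eq n 1
    rw [Nat.choose_one_right] at this
    linarith
  have choose_three : 6 * (n + 2).choose 3 = n * (n + 1) * (n + 2) := by
    have := Nat.add_one_mul_choose_eq (n + 1) 2
    nlinarith
  have two_mul_card : 2 * Nat.card {I : Finset (Fin 2 × Fin n) // IsIntervalClosed I} =
      2 * (1 + n + n ^ 2) + (n + 1) * (n + 2).choose 3 := by
    rw [card_isIntervalClosed_fin_two_prod, card_intervalBounds_fin]
    linarith [two_mul_card_intervalBounds_le_fin (n := n)]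
  refine ⟨?_, two_mul_card⟩
  nlinarith
end

section
/- The number of interval-closed sets of the product of chains [3] × [n] is (n⁶ + 9n⁵ + 61n⁴ + 159n³ + 370n² + 264n + 144)/144. -/
open Finset

lemma IsIntervalClosed.mem_of_le_of_le {P : Type*} [PartialOrder P] {I : Finset P}
    (hI : IsIntervalClosed I) {x y z : P} (hx : x ∈ I) (hy : y ∈ I) (hxz : x ≤ z) (hzy : z ≤ y) :
    z ∈ I := by
  rcases hxz.eq_or_lt with rfl | hxz
  · exact hx
  rcases hzy.eq_or_lt with rfl | hzy
  · exact hy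
  exact hI x hx y hy z hxz hzy

namespace IntervalClosed

/-- The lists `x₀, x₁, …, x_{k-1}` (`k = bs.length`) with `x₀ < m` and `x_{i+1} < x_i`, where
`bs[0] = true` relaxes `x₀ < m` to `x₀ ≤ m` and `bs[i+1] = true` relaxes `x_{i+1} < x_i`
to `x_{i+1} ≤ x_i`. -/
def chains : ℕ → List Bool → Finset (List ℕ)
  | _, [] => {[]}
  | m, b :: bs => (range (m + b.toNat)).biUnion fun x => (chains x bs).image (x :: ·)

@[simp] lemma nil_mem_chains_nil (m : ℕ) : [] ∈ chains m [] := mem_singleton_self _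

@[simp] lemma nil_notMem_chains_cons {m : ℕ} {b : Bool} {bs : List Bool} :
    [] ∉ chains m (b :: bs) := by
  simp [chains]

@[simp] lemma cons_notMem_chains_nil {m x : ℕ} {t : List ℕ} : x :: t ∉ chains m [] := by
  simp [chains]

@[simp] lemma cons_mem_chains_cons {m x : ℕ} {t : List ℕ} {b : Bool} {bs : List Bool} :
    x :: t ∈ chains m (b :: bs) ↔ x < m + b.toNat ∧ t ∈ chains x bs := by
  simp [chains]

lemma sum_range_add_choose_of_le {w k : ℕ} (hwk : w ≤ k) (M : ℕ) :
    ∑ x ∈ range M, (x + w).choose k = (M + w).choose (k + 1) := by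
  induction M with
  | zero => simp [Nat.choose_eq_zero_of_lt (Nat.lt_succ_of_le hwk)]
  | succ M ih =>
    rw [sum_range_succ, ih, Nat.add_right_comm, Nat.choose_succ_succ' (M + w), add_comm]

lemma card_chains (bs : List Bool) (m : ℕ) :
    #(chains m bs) = (m + bs.count true).choose bs.length := by
  induction bs generalizing m with
  | nil => simp [chains]
  | cons b bs ih =>
    rw [chains, card_biUnion]
    · simp_rw [card_image_of_injective _ List.cons_injective, ih]
      rw [sum_range_add_choose_of_le List.count_le_length, List.count_cons, List.length_cons]
      congr 1
      cases b <;> simp [Nat.add_comm, Nat.add_left_comm]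
    · intro x _ y _ hxy
      simp only [Function.onFun, disjoint_left, mem_image]
      rintro _ ⟨t, -, rfl⟩ ⟨t', -, h⟩
      exact hxy (List.cons_eq_cons.mp h).1.symm

def intervals (n : ℕ) : Finset (ℕ × ℕ) := (range n ×ˢ range n).filter fun p => p.1 ≤ p.2

@[simp] lemma mem_intervals {n : ℕ} {p : ℕ × ℕ} : p ∈ intervals n ↔ p.1 ≤ p.2 ∧ p.2 < n := by
  simp [intervals]
  omega

section Rows

variable {n : ℕ}

def endpoints (s : Finset (Fin n)) : Option (ℕ × ℕ) :=
  if h : s.Nonempty then some (s.min' h, s.max' h) else none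

def ofEndpoints (o : Option (ℕ × ℕ)) : Finset (Fin n) :=
  univ.filter fun a => ∃ p ∈ o, p.1 ≤ a ∧ (a : ℕ) ≤ p.2

@[simp] lemma mem_ofEndpoints {o : Option (ℕ × ℕ)} {a : Fin n} :
    a ∈ ofEndpoints o ↔ ∃ p ∈ o, p.1 ≤ a ∧ (a : ℕ) ≤ p.2 := by
  simp [ofEndpoints]

lemma endpoints_mem_insertNone (s : Finset (Fin n)) :
    endpoints s ∈ insertNone (intervals n) := by
  unfold endpoints
  split_ifs with h
  · simp [Fin.le_def.mp (s.min'_le_max' h)]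
  · simp

lemma ofEndpoints_endpoints {s : Finset (Fin n)} (hs : (s : Set (Fin n)).OrdConnected) :
    ofEndpoints (endpoints s) = s := by
  ext c
  unfold endpoints
  split_ifs with h
  · simp only [mem_ofEndpoints, Option.mem_def, Option.some.injEq, exists_eq_left', ← Fin.le_def]
    exact ⟨fun hc => hs.out (s.min'_mem h) (s.max'_mem h) hc,
      fun hc => ⟨s.min'_le c hc, s.le_max' c hc⟩⟩
  · simp [not_nonempty_iff_eq_empty.mp h]

lemma endpoints_ofEndpoints {o : Option (ℕ × ℕ)} (ho : o ∈ insertNone (intervals n)) :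
    endpoints (ofEndpoints (n := n) o) = o := by
  rcases o with _ | ⟨l, r⟩
  · simp [endpoints, ofEndpoints]
  simp only [mem_insertNone, Option.mem_def, Option.some.injEq, forall_eq', mem_intervals] at ho
  have hs (a : Fin n) : a ∈ ofEndpoints (some (l, r)) ↔ l ≤ a ∧ (a : ℕ) ≤ r := by simp
  have hne : (ofEndpoints (n := n) (some (l, r))).Nonempty :=
    ⟨⟨l, by omega⟩, (hs _).2 (by simp; omega)⟩
  have hmin := min'_le _ _ ((hs ⟨l, by omega⟩).2 (by simp; omega))
  have hmax := le_max' _ _ ((hs ⟨r, by omega⟩).2 (by simp; omega))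
  have hmin_mem := (hs _).1 (min'_mem _ hne)
  have hmax_mem := (hs _).1 (max'_mem _ hne)
  rw [endpoints, dif_pos hne, Option.some.injEq, Prod.mk.injEq]
  simp only [Fin.le_def] at hmin hmax
  omega

end Rows

section Profiles

variable {α : Type*} {n : ℕ}

def Spans (oi oj ok : Option (ℕ × ℕ)) : Prop :=
  ∀ p ∈ oi, ∀ q ∈ oj, p.1 ≤ q.2 → ∃ s ∈ ok, s.1 ≤ p.1 ∧ q.2 ≤ s.2

def IsClosedProfile [LE α] (o : α → Option (ℕ × ℕ)) : Prop :=
  ∀ i j k, i ≤ k → k ≤ j → Spans (o i) (o j) (o k)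

instance (oi oj ok : Option (ℕ × ℕ)) : Decidable (Spans oi oj ok) := by
  unfold Spans; infer_instance

instance [LE α] [Fintype α] [DecidableLE α] (o : α → Option (ℕ × ℕ)) :
    Decidable (IsClosedProfile o) := by
  unfold IsClosedProfile; infer_instance

lemma spans_self (o : Option (ℕ × ℕ)) : Spans o o o := by
  intro p hp q hq _
  cases Option.mem_unique hp hq
  exact ⟨p, hp, le_rfl, le_rfl⟩

@[simp] lemma spans_none_left (o o' : Option (ℕ × ℕ)) : Spans none o o' := by simp [Spans]

@[simp] lemma spans_none_middle (o o' : Option (ℕ × ℕ)) : Spans o none o' := by simp [Spans]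

@[simp] lemma spans_some_some_none (p q : ℕ × ℕ) :
    Spans (some p) (some q) none ↔ q.2 < p.1 := by
  simp [Spans]

lemma spans_some_some_some (p q s : ℕ × ℕ) :
    Spans (some p) (some q) (some s) ↔ (p.1 ≤ q.2 → s.1 ≤ p.1 ∧ q.2 ≤ s.2) := by
  simp [Spans]

def profileSet [Fintype α] (o : α → Option (ℕ × ℕ)) : Finset (α × Fin n) :=
  univ.filter fun x => x.2 ∈ ofEndpoints (o x.1)

def row [DecidableEq α] (I : Finset (α × Fin n)) (i : α) : Finset (Fin n) :=
  univ.filter fun a => (i, a) ∈ I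

@[simp] lemma mem_profileSet [Fintype α] {o : α → Option (ℕ × ℕ)} {x : α × Fin n} :
    x ∈ profileSet o ↔ x.2 ∈ ofEndpoints (o x.1) := by
  simp [profileSet]

@[simp] lemma mem_row [DecidableEq α] {I : Finset (α × Fin n)} {i : α} {a : Fin n} :
    a ∈ row I i ↔ (i, a) ∈ I := by
  simp [row]

/-- The interval of `α × Fin n` between `(i, lᵢ)` and `(j, rⱼ)` meets row `k` in `[lᵢ, rⱼ]`, and
every interval between a point of row `i` and a point of row `j` lies inside this one. -/
lemma isIntervalClosed_profileSet_iff [Fintype α] [PartialOrder α] {o : α → Option (ℕ × ℕ)}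
    (ho : ∀ i, o i ∈ insertNone (intervals n)) :
    IsIntervalClosed (profileSet (n := n) o) ↔ IsClosedProfile o := by
  constructor
  · intro hI i j k hik hkj p hp q hq hpq
    have hp' := mem_intervals.mp (mem_insertNone.mp (ho i) p hp)
    have hq' := mem_intervals.mp (mem_insertNone.mp (ho j) q hq)
    have hx : (i, (⟨p.1, by omega⟩ : Fin n)) ∈ profileSet o :=
      mem_profileSet.mpr (mem_ofEndpoints.mpr ⟨p, hp, le_rfl, hp'.1⟩)
    have hy : (j, (⟨q.2, by omega⟩ : Fin n)) ∈ profileSet o :=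
      mem_profileSet.mpr (mem_ofEndpoints.mpr ⟨q, hq, hq'.1, le_rfl⟩)
    obtain ⟨s, hs, hs1, -⟩ := mem_ofEndpoints.mp <| mem_profileSet.mp <|
      hI.mem_of_le_of_le (z := (k, ⟨p.1, by omega⟩)) hx hy ⟨hik, le_rfl⟩
        ⟨hkj, Fin.mk_le_mk.mpr hpq⟩
    obtain ⟨s', hs', -, hs'2⟩ := mem_ofEndpoints.mp <| mem_profileSet.mp <|
      hI.mem_of_le_of_le (z := (k, ⟨q.2, by omega⟩)) hx hy ⟨hik, Fin.mk_le_mk.mpr hpq⟩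
        ⟨hkj, le_rfl⟩
    cases Option.mem_unique hs hs'
    exact ⟨s, hs, hs1, hs'2⟩
  · rintro ho ⟨i, a⟩ hx ⟨j, b⟩ hy ⟨k, c⟩ hxz hzy
    simp only [mem_profileSet, mem_ofEndpoints] at hx hy ⊢
    obtain ⟨p, hp, hpa, -⟩ := hx
    obtain ⟨q, hq, -, hqb⟩ := hy
    obtain ⟨hik, hac⟩ := Prod.mk_le_mk.mp hxz.le
    obtain ⟨hkj, hcb⟩ := Prod.mk_le_mk.mp hzy.le
    rw [Fin.le_def] at hac hcb
    obtain ⟨s, hs, hs1, hs2⟩ := ho i j k hik hkj p hp q hq (by omega)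
    exact ⟨s, hs, by omega, by omega⟩

lemma ordConnected_row [PartialOrder α] [DecidableEq α] {I : Finset (α × Fin n)}
    (hI : IsIntervalClosed I) (i : α) : (row I i : Set (Fin n)).OrdConnected :=
  ⟨fun a ha b hb c hc => by
    simp only [mem_coe, mem_row] at *
    exact hI.mem_of_le_of_le ha hb ⟨le_rfl, hc.1⟩ ⟨le_rfl, hc.2⟩⟩

lemma profileSet_endpoints_row [Fintype α] [PartialOrder α] [DecidableEq α]
    {I : Finset (α × Fin n)} (hI : IsIntervalClosed I) :
    profileSet (fun i => endpoints (row I i)) = I := by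
  ext ⟨i, a⟩
  simp only [mem_profileSet]
  rw [ofEndpoints_endpoints (ordConnected_row hI i), mem_row]

lemma row_profileSet [Fintype α] [DecidableEq α] (o : α → Option (ℕ × ℕ)) (i : α) :
    row (profileSet (n := n) o) i = ofEndpoints (o i) := by
  ext; simp

def equivClosedProfiles [Fintype α] [PartialOrder α] [DecidableEq α] :
    {I : Finset (α × Fin n) // IsIntervalClosed I} ≃
      {o : α → Option (ℕ × ℕ) // (∀ i, o i ∈ insertNone (intervals n)) ∧ IsClosedProfile o} where
  toFun I := ⟨fun i => endpoints (row I.1 i), fun _ => endpoints_mem_insertNone _,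
    (isIntervalClosed_profileSet_iff fun _ => endpoints_mem_insertNone _).mp
      (by rw [profileSet_endpoints_row I.2]; exact I.2)⟩
  invFun o := ⟨profileSet o, (isIntervalClosed_profileSet_iff o.2.1).mpr o.2.2⟩
  left_inv I := Subtype.ext (profileSet_endpoints_row I.2)
  right_inv o := Subtype.ext <| funext fun i => by
    show endpoints (row (profileSet o.1) i) = o.1 i
    rw [row_profileSet, endpoints_ofEndpoints (o.2.1 i)]

end Profiles

section Counting

variable (n : ℕ)

lemma card_intervals : #(intervals n) = (n + 1).choose 2 := by
  refine (card_nbij' (fun p => [p.2, p.1]) (fun l => (l[1]!, l[0]!)) ?_ ?_ (fun _ _ => rfl)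
    ?_).trans (card_chains [false, true] n)
  · rintro ⟨a, b⟩ h
    simp at h ⊢
    omega
  all_goals
    intro l hl
    rcases l with _ | ⟨a, _ | ⟨b, _ | ⟨c, l⟩⟩⟩ <;> simp at hl ⊢ <;> omega

lemma sum_separated :
    ∑ p ∈ intervals n, ∑ q ∈ intervals n, (if q.2 < p.1 then 1 else 0) = (n + 2).choose 4 := by
  rw [← sum_product', ← card_filter]
  refine (card_nbij' (fun ⟨p, q⟩ => [p.2, p.1, q.2, q.1])
    (fun l => ((l[1]!, l[0]!), (l[3]!, l[2]!))) ?_ ?_ (fun ⟨_, _⟩ _ => rfl) ?_).trans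
    (card_chains [false, true, false, true] n)
  · rintro ⟨⟨a, b⟩, c, d⟩ h
    simp at h ⊢
    omega
  all_goals
    intro l hl
    rcases l with _ | ⟨a, _ | ⟨b, _ | ⟨c, _ | ⟨d, _ | ⟨e, l⟩⟩⟩⟩⟩ <;> simp at hl ⊢ <;> omega

lemma sum_staircase :
    ∑ p ∈ intervals n, ∑ q ∈ intervals n,
      (if q.1 ≤ p.1 ∧ p.1 ≤ q.2 ∧ q.2 ≤ p.2 then 1 else 0) = (n + 3).choose 4 := by
  rw [← sum_product', ← card_filter]
  refine (card_nbij' (fun ⟨p, q⟩ => [p.2, q.2, p.1, q.1])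
    (fun l => ((l[2]!, l[0]!), (l[3]!, l[1]!))) ?_ ?_ (fun ⟨_, _⟩ _ => rfl) ?_).trans
    (card_chains [false, true, true, true] n)
  · rintro ⟨⟨a, b⟩, c, d⟩ h
    simp at h ⊢
    omega
  all_goals
    intro l hl
    rcases l with _ | ⟨a, _ | ⟨b, _ | ⟨c, _ | ⟨d, _ | ⟨e, l⟩⟩⟩⟩⟩ <;> simp at hl ⊢ <;> omega

lemma sum_separated_separated :
    ∑ p ∈ intervals n, ∑ q ∈ intervals n, ∑ s ∈ intervals n,
      (if s.2 < q.1 ∧ q.2 < p.1 then 1 else 0) = (n + 3).choose 6 := by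
  simp only [← sum_product']
  rw [← card_filter]
  refine (card_nbij' (fun ⟨p, q, s⟩ => [p.2, p.1, q.2, q.1, s.2, s.1])
    (fun l => ((l[1]!, l[0]!), (l[3]!, l[2]!), (l[5]!, l[4]!)))
    ?_ ?_ (fun ⟨_, _, _⟩ _ => rfl) ?_).trans
    (card_chains [false, true, false, true, false, true] n)
  · rintro ⟨⟨a, b⟩, ⟨c, d⟩, e, f⟩ h
    simp at h ⊢
    omega
  all_goals
    intro l hl
    rcases l with _ | ⟨a, _ | ⟨b, _ | ⟨c, _ | ⟨d, _ | ⟨e, _ | ⟨f, _ | ⟨g, l⟩⟩⟩⟩⟩⟩⟩ <;>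
      simp at hl ⊢ <;> omega

lemma sum_separated_staircase :
    ∑ p ∈ intervals n, ∑ q ∈ intervals n, ∑ s ∈ intervals n,
      (if q.2 < p.1 ∧ s.1 ≤ q.1 ∧ q.1 ≤ s.2 ∧ s.2 ≤ q.2 then 1 else 0) = (n + 4).choose 6 := by
  simp only [← sum_product']
  rw [← card_filter]
  refine (card_nbij' (fun ⟨p, q, s⟩ => [p.2, p.1, q.2, s.2, q.1, s.1])
    (fun l => ((l[1]!, l[0]!), (l[4]!, l[2]!), (l[5]!, l[3]!)))
    ?_ ?_ (fun ⟨_, _, _⟩ _ => rfl) ?_).trans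
    (card_chains [false, true, false, true, true, true] n)
  · rintro ⟨⟨a, b⟩, ⟨c, d⟩, e, f⟩ h
    simp at h ⊢
    omega
  all_goals
    intro l hl
    rcases l with _ | ⟨a, _ | ⟨b, _ | ⟨c, _ | ⟨d, _ | ⟨e, _ | ⟨f, _ | ⟨g, l⟩⟩⟩⟩⟩⟩⟩ <;>
      simp at hl ⊢ <;> omega

lemma sum_staircase_separated :
    ∑ p ∈ intervals n, ∑ q ∈ intervals n, ∑ s ∈ intervals n,
      (if q.1 ≤ p.1 ∧ p.1 ≤ q.2 ∧ q.2 ≤ p.2 ∧ s.2 < q.1 then 1 else 0) = (n + 4).choose 6 := by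
  simp only [← sum_product']
  rw [← card_filter]
  refine (card_nbij' (fun ⟨p, q, s⟩ => [p.2, q.2, p.1, q.1, s.2, s.1])
    (fun l => ((l[2]!, l[0]!), (l[3]!, l[1]!), (l[5]!, l[4]!)))
    ?_ ?_ (fun ⟨_, _, _⟩ _ => rfl) ?_).trans
    (card_chains [false, true, true, true, false, true] n)
  · rintro ⟨⟨a, b⟩, ⟨c, d⟩, e, f⟩ h
    simp at h ⊢
    omega
  all_goals
    intro l hl
    rcases l with _ | ⟨a, _ | ⟨b, _ | ⟨c, _ | ⟨d, _ | ⟨e, _ | ⟨f, _ | ⟨g, l⟩⟩⟩⟩⟩⟩⟩ <;>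
      simp at hl ⊢ <;> omega

lemma sum_staircase_staircase_of_lt :
    ∑ p ∈ intervals n, ∑ q ∈ intervals n, ∑ s ∈ intervals n,
      (if q.1 ≤ p.1 ∧ p.1 ≤ q.2 ∧ q.2 ≤ p.2 ∧ s.1 ≤ q.1 ∧ q.1 ≤ s.2 ∧
        s.2 ≤ q.2 ∧ s.2 < p.1 then 1 else 0) = (n + 4).choose 6 := by
  simp only [← sum_product']
  rw [← card_filter]
  refine (card_nbij' (fun ⟨p, q, s⟩ => [p.2, q.2, p.1, s.2, q.1, s.1])
    (fun l => ((l[2]!, l[0]!), (l[4]!, l[1]!), (l[5]!, l[3]!)))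
    ?_ ?_ (fun ⟨_, _, _⟩ _ => rfl) ?_).trans
    (card_chains [false, true, true, false, true, true] n)
  · rintro ⟨⟨a, b⟩, ⟨c, d⟩, e, f⟩ h
    simp at h ⊢
    omega
  all_goals
    intro l hl
    rcases l with _ | ⟨a, _ | ⟨b, _ | ⟨c, _ | ⟨d, _ | ⟨e, _ | ⟨f, _ | ⟨g, l⟩⟩⟩⟩⟩⟩⟩ <;>
      simp at hl ⊢ <;> omega

lemma sum_staircase_staircase_of_le :
    ∑ p ∈ intervals n, ∑ q ∈ intervals n, ∑ s ∈ intervals n,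
      (if q.1 ≤ p.1 ∧ p.1 ≤ q.2 ∧ q.2 ≤ p.2 ∧ s.1 ≤ q.1 ∧ q.1 ≤ s.2 ∧
        s.2 ≤ q.2 ∧ p.1 ≤ s.2 then 1 else 0) = (n + 5).choose 6 := by
  simp only [← sum_product']
  rw [← card_filter]
  refine (card_nbij' (fun ⟨p, q, s⟩ => [p.2, q.2, s.2, p.1, q.1, s.1])
    (fun l => ((l[3]!, l[0]!), (l[4]!, l[1]!), (l[5]!, l[2]!)))
    ?_ ?_ (fun ⟨_, _, _⟩ _ => rfl) ?_).trans
    (card_chains [false, true, true, true, true, true] n)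
  · rintro ⟨⟨a, b⟩, ⟨c, d⟩, e, f⟩ h
    simp at h ⊢
    omega
  all_goals
    intro l hl
    rcases l with _ | ⟨a, _ | ⟨b, _ | ⟨c, _ | ⟨d, _ | ⟨e, _ | ⟨f, _ | ⟨g, l⟩⟩⟩⟩⟩⟩⟩ <;>
      simp at hl ⊢ <;> omega

lemma isClosedProfile_fin_three {a b c : Option (ℕ × ℕ)} :
    IsClosedProfile ![a, b, c] ↔ Spans a b a ∧ Spans a b b ∧ Spans b c b ∧ Spans b c c ∧
      Spans a c a ∧ Spans a c b ∧ Spans a c c := by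
  simp only [IsClosedProfile, Fin.forall_fin_succ, spans_self]
  simp
  tauto

lemma sum_isClosedProfile_some_some_none :
    ∑ p ∈ intervals n, ∑ q ∈ intervals n,
      (if IsClosedProfile ![some p, some q, none] then 1 else 0) =
      (n + 2).choose 4 + (n + 3).choose 4 := by
  rw [← sum_separated, ← sum_staircase, ← sum_add_distrib]
  refine sum_congr rfl fun p hp => ?_
  rw [← sum_add_distrib]
  refine sum_congr rfl fun q hq => ?_
  simp only [isClosedProfile_fin_three, spans_some_some_some, spans_none_middle, and_true,
    mem_intervals] at hp hq ⊢
  split_ifs <;> omega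

lemma sum_isClosedProfile_some_none_some :
    ∑ p ∈ intervals n, ∑ s ∈ intervals n,
      (if IsClosedProfile ![some p, none, some s] then 1 else 0) = (n + 2).choose 4 := by
  rw [← sum_separated]
  refine sum_congr rfl fun p hp => sum_congr rfl fun s hs => ?_
  simp only [isClosedProfile_fin_three, spans_some_some_some, spans_none_left, spans_none_middle,
    spans_some_some_none, true_and, mem_intervals] at hp hs ⊢
  split_ifs <;> omega

lemma sum_isClosedProfile_some_some_some :
    ∑ p ∈ intervals n, ∑ q ∈ intervals n, ∑ s ∈ intervals n,
      (if IsClosedProfile ![some p, some q, some s] then 1 else 0) =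
      (n + 3).choose 6 + 3 * (n + 4).choose 6 + (n + 5).choose 6 := by
  -- Rows `0, 1` and rows `1, 2` are each separated or in staircase position, and in all four
  -- cases the condition between rows `0` and `2` already holds; the staircase-staircase case is
  -- split according to `r₂ < l₀` to get chains.
  have key : ∀ p ∈ intervals n, ∀ q ∈ intervals n, ∀ s ∈ intervals n,
      (if IsClosedProfile ![some p, some q, some s] then 1 else 0) =
        (if s.2 < q.1 ∧ q.2 < p.1 then 1 else 0) +
        (if q.2 < p.1 ∧ s.1 ≤ q.1 ∧ q.1 ≤ s.2 ∧ s.2 ≤ q.2 then 1 else 0) +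
        (if q.1 ≤ p.1 ∧ p.1 ≤ q.2 ∧ q.2 ≤ p.2 ∧ s.2 < q.1 then 1 else 0) +
        (if q.1 ≤ p.1 ∧ p.1 ≤ q.2 ∧ q.2 ≤ p.2 ∧ s.1 ≤ q.1 ∧ q.1 ≤ s.2 ∧ s.2 ≤ q.2 ∧ s.2 < p.1
          then 1 else 0) +
        (if q.1 ≤ p.1 ∧ p.1 ≤ q.2 ∧ q.2 ≤ p.2 ∧ s.1 ≤ q.1 ∧ q.1 ≤ s.2 ∧ s.2 ≤ q.2 ∧ p.1 ≤ s.2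
          then 1 else 0) := by
    intro p hp q hq s hs
    simp only [isClosedProfile_fin_three, spans_some_some_some, mem_intervals] at hp hq hs ⊢
    split_ifs <;> omega
  rw [sum_congr rfl fun p hp => sum_congr rfl fun q hq => sum_congr rfl fun s hs =>
    key p hp q hq s hs]
  simp only [sum_add_distrib]
  rw [sum_separated_separated, sum_separated_staircase, sum_staircase_separated,
    sum_staircase_staircase_of_lt, sum_staircase_staircase_of_le]
  ring

lemma card_closedProfiles_eq_sum :
    Nat.card {o : Fin 3 → Option (ℕ × ℕ) //
      (∀ i, o i ∈ insertNone (intervals n)) ∧ IsClosedProfile o} =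
      ∑ a ∈ insertNone (intervals n), ∑ b ∈ insertNone (intervals n),
        ∑ c ∈ insertNone (intervals n), if IsClosedProfile ![a, b, c] then 1 else 0 := by
  set Ω := insertNone (intervals n)
  let e : (Fin 3 → Option (ℕ × ℕ)) ≃ Option (ℕ × ℕ) × Option (ℕ × ℕ) × Option (ℕ × ℕ) :=
    { toFun o := (o 0, o 1, o 2)
      invFun t := ![t.1, t.2.1, t.2.2]
      left_inv o := by ext i; fin_cases i <;> rfl
      right_inv t := rfl }
  rw [Nat.card_congr (e.subtypeEquiv (q := (· ∈ (Ω ×ˢ Ω ×ˢ Ω).filter fun t =>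
    IsClosedProfile ![t.1, t.2.1, t.2.2])) fun o => ?_)]
  · rw [Nat.card_eq_finsetCard, card_filter, sum_product]
    exact sum_congr rfl fun a _ => sum_product ..
  have ho : ![o 0, o 1, o 2] = o := e.left_inv o
  simp only [mem_filter, mem_product]
  show _ ↔ (o 0 ∈ Ω ∧ o 1 ∈ Ω ∧ o 2 ∈ Ω) ∧ IsClosedProfile ![o 0, o 1, o 2]
  rw [ho]
  exact and_congr_left' ⟨fun h => ⟨h 0, h 1, h 2⟩, fun h i => by fin_cases i <;> simp [h]⟩

lemma card_closedProfiles_fin_three :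
    Nat.card {o : Fin 3 → Option (ℕ × ℕ) //
      (∀ i, o i ∈ insertNone (intervals n)) ∧ IsClosedProfile o} =
      1 + 3 * (n + 1).choose 2 + 3 * (n + 2).choose 4 + 2 * (n + 3).choose 4 +
        (n + 3).choose 6 + 3 * (n + 4).choose 6 + (n + 5).choose 6 := by
  have h_none_some_some (q s : ℕ × ℕ) :
      IsClosedProfile ![none, some q, some s] ↔ IsClosedProfile ![some q, some s, none] := by
    simp [isClosedProfile_fin_three]
  rw [card_closedProfiles_eq_sum]
  simp only [sum_insertNone, sum_add_distrib, h_none_some_some,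
    sum_isClosedProfile_some_some_none, sum_isClosedProfile_some_none_some,
    sum_isClosedProfile_some_some_some]
  simp [isClosedProfile_fin_three, card_intervals]
  ring

lemma choose_sum_eq_polynomial :
    144 * (1 + 3 * (n + 1).choose 2 + 3 * (n + 2).choose 4 + 2 * (n + 3).choose 4 +
      (n + 3).choose 6 + 3 * (n + 4).choose 6 + (n + 5).choose 6) =
      n ^ 6 + 9 * n ^ 5 + 61 * n ^ 4 + 159 * n ^ 3 + 370 * n ^ 2 + 264 * n + 144 := by
  apply Nat.cast_injective (R := ℚ)
  push_cast [Nat.cast_choose_eq_descPochhammer_div ℚ, descPochhammer_succ_eval,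
    descPochhammer_zero, Polynomial.eval_one, Nat.factorial]
  ring

end Counting

end IntervalClosed

/-- The number of interval-closed sets of `[3] × [n]` is
`(n⁶ + 9n⁵ + 61n⁴ + 159n³ + 370n² + 264n + 144)/144` (denominator cleared). -/
theorem card_ics_three_times_n (n : ℕ) :
    144 * Nat.card {I : Finset (Fin 3 × Fin n) // IsIntervalClosed I} =
      n ^ 6 + 9 * n ^ 5 + 61 * n ^ 4 + 159 * n ^ 3 + 370 * n ^ 2 + 264 * n + 144 := by
  rw [Nat.card_congr IntervalClosed.equivClosedProfiles,
    IntervalClosed.card_closedProfiles_fin_three, IntervalClosed.choose_sum_eq_polynomial]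
end

section
/- The number of interval-closed sets I of [m] × [n] such that for every a ∈ [m] there exists b with (a, b) ∈ I is the Narayana number N(m+n, n) = (1/(m+n))·binomial(m+n, n)·binomial(m+n, n−1). -/
open Finset

/-- Narayana-type closed form for the number of pairs of antitone sequences of
length `m+1` bounded by `x` resp. `y`. -/
def narC (m x y : ℕ) : ℤ :=
  ((x + m).choose (m + 1) : ℤ) * ((y + m).choose (m + 1) : ℤ) -
    ((x + m).choose (m + 2) : ℤ) * ((y + m).choose m : ℤ)

lemma hockey (s t x : ℕ) :
    (∑ a ∈ Finset.range x, ((a + s).choose t : ℤ)) =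
      ((x + s).choose (t + 1) : ℤ) - (s.choose (t + 1) : ℤ) := by
  induction x with
  | zero => simp
  | succ x ih =>
      rw [Finset.sum_range_succ, ih, show x + 1 + s = x + s + 1 by ring,
        Nat.choose_succ_succ]
      push_cast
      ring

lemma hockeyIco (s t a y : ℕ) (h : a ≤ y) :
    (∑ b ∈ Finset.Ico a y, ((b + s).choose t : ℤ)) =
      ((y + s).choose (t + 1) : ℤ) - ((a + s).choose (t + 1) : ℤ) := by
  rw [Finset.sum_Ico_eq_sub _ h, hockey, hockey]
  ring

lemma sum_narC_base (x y : ℕ) (hxy : x ≤ y) :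
    (∑ a ∈ Finset.range x, ∑ b ∈ Finset.Ico a y, (1 : ℤ)) = narC 0 x y := by
  have h1 : ∀ a ∈ Finset.range x, (∑ b ∈ Finset.Ico a y, (1 : ℤ)) =
      ((y + 0).choose (0 + 1) : ℤ) - ((a + 0).choose (0 + 1) : ℤ) := by
    intro a ha
    rw [← hockeyIco 0 0 a y (le_trans (Nat.le_of_lt_succ (Nat.lt_succ_of_lt (mem_range.mp ha))) hxy)]
    simp
  rw [Finset.sum_congr rfl h1, Finset.sum_sub_distrib, Finset.sum_const, hockey]
  have h0 : Nat.choose 0 2 = 0 := rfl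
  simp only [narC, Finset.card_range, Nat.add_zero, Nat.choose_one_right, Nat.choose_zero_right,
    h0, nsmul_eq_mul, Nat.cast_zero, Nat.cast_one, Nat.choose_one_right]
  push_cast
  simp only [Nat.choose_one_right]
  ring

lemma sum_narC_step (m x y : ℕ) (hxy : x ≤ y) :
    (∑ a ∈ Finset.range x, ∑ b ∈ Finset.Ico a y, narC m (a + 1) (b + 1)) =
      narC (m + 1) x y := by
  have h1 : ∀ a ∈ Finset.range x, (∑ b ∈ Finset.Ico a y, narC m (a + 1) (b + 1)) =
      ((a + (m + 1)).choose (m + 1) : ℤ) * ((y + (m + 1)).choose (m + 2) : ℤ)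
        - ((a + (m + 1)).choose (m + 2) : ℤ) * ((y + (m + 1)).choose (m + 1) : ℤ) := by
    intro a ha
    have hay : a ≤ y := le_trans (Nat.le_of_lt_succ (Nat.lt_succ_of_lt (mem_range.mp ha))) hxy
    have e1 : (∑ b ∈ Finset.Ico a y, ((b + (m+1)).choose (m + 1) : ℤ)) =
        ((y + (m+1)).choose (m + 2) : ℤ) - ((a + (m+1)).choose (m + 2) : ℤ) :=
      hockeyIco (m+1) (m+1) a y hay
    have e2 : (∑ b ∈ Finset.Ico a y, ((b + (m+1)).choose m : ℤ)) =
        ((y + (m+1)).choose (m + 1) : ℤ) - ((a + (m+1)).choose (m + 1) : ℤ) :=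
      hockeyIco (m+1) m a y hay
    calc (∑ b ∈ Finset.Ico a y, narC m (a + 1) (b + 1))
        = ((a + (m+1)).choose (m + 1) : ℤ) * (∑ b ∈ Finset.Ico a y, ((b + (m+1)).choose (m + 1) : ℤ))
          - ((a + (m+1)).choose (m + 2) : ℤ) * (∑ b ∈ Finset.Ico a y, ((b + (m+1)).choose m : ℤ)) := by
            rw [Finset.mul_sum, Finset.mul_sum, ← Finset.sum_sub_distrib]
            refine Finset.sum_congr rfl fun b _ => ?_
            simp only [narC, show a + 1 + m = a + (m+1) by ring, show b + 1 + m = b + (m+1) by ring]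
      _ = _ := by rw [e1, e2]; ring
  rw [Finset.sum_congr rfl h1]
  have e3 : (∑ a ∈ Finset.range x, ((a + (m+1)).choose (m + 1) : ℤ)) =
      ((x + (m+1)).choose (m + 2) : ℤ) := by
    have h0 : (m+1).choose (m+2) = 0 := Nat.choose_eq_zero_of_lt (by omega)
    rw [hockey, h0]; push_cast; ring
  have e4 : (∑ a ∈ Finset.range x, ((a + (m+1)).choose (m + 2) : ℤ)) =
      ((x + (m+1)).choose (m + 3) : ℤ) := by
    have h0 : (m+1).choose (m+3) = 0 := Nat.choose_eq_zero_of_lt (by omega)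
    rw [hockey, h0]; push_cast; ring
  rw [Finset.sum_sub_distrib, ← Finset.sum_mul, ← Finset.sum_mul, e3, e4]
  simp only [narC, show x + (m+1) = x + m + 1 by rfl, show y + (m+1) = y + m + 1 by rfl]


open scoped Classical in
/-- Pairs of antitone sequences `l ≤ r : Fin m → Fin n` with `l` bounded by `x`
and `r` bounded by `y`. -/
noncomputable def pairSet (n m x y : ℕ) : Finset ((Fin m → Fin n) × (Fin m → Fin n)) :=
  Finset.univ.filter fun p => Antitone p.1 ∧ Antitone p.2 ∧ (∀ i, p.1 i ≤ p.2 i) ∧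
    (∀ i, (p.1 i : ℕ) < x) ∧ (∀ i, (p.2 i : ℕ) < y)

lemma mem_pairSet {n m x y : ℕ} {p : (Fin m → Fin n) × (Fin m → Fin n)} :
    p ∈ pairSet n m x y ↔ Antitone p.1 ∧ Antitone p.2 ∧ (∀ i, p.1 i ≤ p.2 i) ∧
      (∀ i, (p.1 i : ℕ) < x) ∧ (∀ i, (p.2 i : ℕ) < y) := by
  simp [pairSet]

lemma card_pairSet_zero (n x y : ℕ) : (pairSet n 0 x y).card = 1 := by
  have h : pairSet n 0 x y = Finset.univ := by
    ext p
    simp only [mem_pairSet, Finset.mem_univ, iff_true]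
    exact ⟨fun i => i.elim0, fun i => i.elim0, fun i => i.elim0, fun i => i.elim0, fun i => i.elim0⟩
  rw [h, Finset.card_univ]
  simp

lemma antitone_cons {m n : ℕ} (h : Fin n) (q : Fin m → Fin n) (hq : Antitone q)
    (hh : ∀ k, q k ≤ h) : Antitone (Fin.cons h q : Fin (m + 1) → Fin n) := by
  intro i j hij
  induction j using Fin.cases with
  | zero =>
      have : i = 0 := le_antisymm hij (Fin.zero_le i)
      subst this; exact le_refl _
  | succ j' =>
      induction i using Fin.cases with
      | zero => simpa using hh j'
      | succ i' =>
          simp only [Fin.cons_succ]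
          exact hq (by rwa [Fin.succ_le_succ_iff] at hij)

lemma card_pairSet_succ (n m x y : ℕ) (hx : x ≤ n) (hy : y ≤ n) :
    (pairSet n (m + 1) x y).card =
      ∑ a ∈ Finset.range x, ∑ b ∈ Finset.Ico a y, (pairSet n m (a + 1) (b + 1)).card := by
  classical
  rw [← Finset.sum_sigma (Finset.range x) (fun a => Finset.Ico a y)
    (fun t => (pairSet n m (t.1 + 1) (t.2 + 1)).card)]
  rw [Finset.card_eq_sum_card_fiberwise
    (f := fun p : (Fin (m+1) → Fin n) × (Fin (m+1) → Fin n) =>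
      (⟨(p.1 0 : ℕ), (p.2 0 : ℕ)⟩ : Σ _ : ℕ, ℕ))
    (t := (Finset.range x).sigma fun a => Finset.Ico a y) ?mem]
  case mem =>
    intro p hp
    obtain ⟨h1, h2, h3, h4, h5⟩ := mem_pairSet.mp hp
    simp only [Finset.mem_sigma, Finset.mem_range, Finset.mem_Ico]
    exact Finset.mem_sigma.mpr ⟨Finset.mem_range.mpr (h4 0), Finset.mem_Ico.mpr ⟨h3 0, h5 0⟩⟩
  refine Finset.sum_congr rfl fun t ht => ?_
  obtain ⟨a, b⟩ := t
  simp only [Finset.mem_sigma, Finset.mem_range, Finset.mem_Ico] at ht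
  obtain ⟨hax, hab, hby⟩ := ht
  have han : a < n := lt_of_lt_of_le hax hx
  have hbn : b < n := lt_of_lt_of_le hby hy
  refine Finset.card_bij' (fun p _ => (fun k => p.1 k.succ, fun k => p.2 k.succ))
    (fun q _ => (Fin.cons ⟨a, han⟩ q.1, Fin.cons ⟨b, hbn⟩ q.2)) ?_ ?_ ?_ ?_
  · -- forward maps into pairSet n m (a+1) (b+1)
    intro p hp
    simp only [Finset.mem_filter] at hp
    obtain ⟨hp, hfib⟩ := hp
    obtain ⟨h1, h2, h3, h4, h5⟩ := mem_pairSet.mp hp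
    have ha0 : (p.1 0 : ℕ) = a := congrArg Sigma.fst hfib
    have hb0 : (p.2 0 : ℕ) = b := by
      have := congrArg (fun s : Σ _ : ℕ, ℕ => s.2) hfib
      simpa using this
    refine mem_pairSet.mpr ⟨?_, ?_, fun k => h3 _, fun k => ?_, fun k => ?_⟩
    · exact fun i j hij => h1 (Fin.succ_le_succ_iff.mpr hij)
    · exact fun i j hij => h2 (Fin.succ_le_succ_iff.mpr hij)
    · show (p.1 k.succ : ℕ) < a + 1
      have h0 := Fin.le_def.mp (h1 (Fin.zero_le k.succ))
      omega
    · show (p.2 k.succ : ℕ) < b + 1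
      have h0 := Fin.le_def.mp (h2 (Fin.zero_le k.succ))
      omega
  · -- backward maps into the fiber
    intro q hq
    obtain ⟨h1, h2, h3, h4, h5⟩ := mem_pairSet.mp hq
    have h4' : ∀ i, (q.1 i : ℕ) < a + 1 := h4
    have h5' : ∀ i, (q.2 i : ℕ) < b + 1 := h5
    refine Finset.mem_filter.mpr ⟨mem_pairSet.mpr ⟨?_, ?_, ?_, ?_, ?_⟩, ?_⟩
    · exact antitone_cons _ _ h1 fun k => Fin.le_def.mpr (by have := h4' k; simp; omega)
    · exact antitone_cons _ _ h2 fun k => Fin.le_def.mpr (by have := h5' k; simp; omega)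
    · intro i
      induction i using Fin.cases with
      | zero => simp only [Fin.cons_zero, Fin.le_def]; simpa using hab
      | succ i' => simpa using h3 i'
    · intro i
      induction i using Fin.cases with
      | zero => simpa using hax
      | succ i' => have := h4' i'; simp only [Fin.cons_succ]; omega
    · intro i
      induction i using Fin.cases with
      | zero => simpa using hby
      | succ i' => have := h5' i'; simp only [Fin.cons_succ]; omega
    · simp
  · -- left inverse
    intro p hp
    simp only [Finset.mem_filter] at hp
    obtain ⟨_, hfib⟩ := hp
    have ha0 : (p.1 0 : ℕ) = a := congrArg Sigma.fst hfib
    have hb0 : (p.2 0 : ℕ) = b := by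
      have := congrArg (fun s : Σ _ : ℕ, ℕ => s.2) hfib
      simpa using this
    refine Prod.ext ?_ ?_
    · funext i
      induction i using Fin.cases with
      | zero => simp [Fin.ext_iff, ha0]
      | succ i' => simp
    · funext i
      induction i using Fin.cases with
      | zero => simp [Fin.ext_iff, hb0]
      | succ i' => simp
  · -- right inverse
    intro q hq
    refine Prod.ext ?_ ?_ <;> funext i <;> simp

lemma card_pairSet (n : ℕ) : ∀ m x y : ℕ, x ≤ n → y ≤ n → x ≤ y →
    ((pairSet n (m + 1) x y).card : ℤ) = narC m x y := by
  intro m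
  induction m with
  | zero =>
      intro x y hx hy hxy
      rw [card_pairSet_succ n 0 x y hx hy]
      push_cast
      rw [← sum_narC_base x y hxy]
      refine Finset.sum_congr rfl fun a _ => Finset.sum_congr rfl fun b _ => ?_
      rw [card_pairSet_zero]
      norm_num
  | succ m ih =>
      intro x y hx hy hxy
      rw [card_pairSet_succ n (m + 1) x y hx hy]
      push_cast
      rw [← sum_narC_step m x y hxy]
      refine Finset.sum_congr rfl fun a ha => Finset.sum_congr rfl fun b hb => ?_
      simp only [Finset.mem_range] at ha
      simp only [Finset.mem_Ico] at hb
      exact ih (a + 1) (b + 1) (by omega) (by omega) (by omega)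



lemma card_ics_eq (m n : ℕ) :
    Nat.card {I : Finset (Fin m × Fin n) //
        IsIntervalClosed I ∧ ∀ a : Fin m, ∃ b : Fin n, (a, b) ∈ I} =
      (pairSet n m n n).card := by
  classical
  rw [Nat.card_eq_fintype_card, Fintype.card_subtype]
  refine (Finset.card_bij
    (fun p _ => Finset.univ.filter fun q : Fin m × Fin n => p.1 q.1 ≤ q.2 ∧ q.2 ≤ p.2 q.1)
    ?_ ?_ ?_).symm
  · -- maps into interval-closed sets with surjective first coordinate
    intro p hp
    obtain ⟨h1, h2, h3, -, -⟩ := mem_pairSet.mp hp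
    rw [Finset.mem_filter]
    refine ⟨Finset.mem_univ _, ?_, fun a => ⟨p.1 a, ?_⟩⟩
    · intro x hx y hy z hxz hzy
      simp only [Finset.mem_filter, Finset.mem_univ, true_and] at hx hy ⊢
      have hxz' := Prod.le_def.mp (le_of_lt hxz)
      have hzy' := Prod.le_def.mp (le_of_lt hzy)
      exact ⟨le_trans (h1 hxz'.1) (le_trans hx.1 hxz'.2),
        le_trans hzy'.2 (le_trans hy.2 (h2 hzy'.1))⟩
    · simp only [Finset.mem_filter, Finset.mem_univ, true_and]
      exact ⟨le_refl _, h3 a⟩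
  · -- injective
    intro p hp p' hp' hΦ
    obtain ⟨h1, h2, h3, -, -⟩ := mem_pairSet.mp hp
    obtain ⟨h1', h2', h3', -, -⟩ := mem_pairSet.mp hp'
    have key : ∀ a : Fin m, ∀ b : Fin n,
        (p.1 a ≤ b ∧ b ≤ p.2 a) ↔ (p'.1 a ≤ b ∧ b ≤ p'.2 a) := by
      intro a b
      have := Finset.ext_iff.mp hΦ (a, b)
      simpa using this
    refine Prod.ext (funext fun a => ?_) (funext fun a => ?_)
    · have k1 := (key a (p.1 a)).mp ⟨le_refl _, h3 a⟩
      have k2 := (key a (p'.1 a)).mpr ⟨le_refl _, h3' a⟩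
      exact le_antisymm k2.1 k1.1
    · have k1 := (key a (p.2 a)).mp ⟨h3 a, le_refl _⟩
      have k2 := (key a (p'.2 a)).mpr ⟨h3' a, le_refl _⟩
      exact le_antisymm k1.2 k2.2
  · -- surjective
    intro I hI
    rw [Finset.mem_filter] at hI
    obtain ⟨-, hIC, hsur⟩ := hI
    have hne : ∀ a : Fin m, ((I.filter fun q => q.1 = a).image Prod.snd).Nonempty := by
      intro a
      obtain ⟨b, hb⟩ := hsur a
      exact ⟨b, Finset.mem_image.mpr ⟨(a, b), Finset.mem_filter.mpr ⟨hb, rfl⟩, rfl⟩⟩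
    set fib : Fin m → Finset (Fin n) := fun a => (I.filter fun q => q.1 = a).image Prod.snd
      with hfib
    have memfib : ∀ a b, b ∈ fib a ↔ (a, b) ∈ I := by
      intro a b
      simp only [hfib, Finset.mem_image, Finset.mem_filter]
      constructor
      · rintro ⟨⟨x1, x2⟩, ⟨hx, rfl⟩, rfl⟩
        exact hx
      · intro h
        exact ⟨(a, b), ⟨h, rfl⟩, rfl⟩
    set l : Fin m → Fin n := fun a => (fib a).min' (hne a) with hl
    set r : Fin m → Fin n := fun a => (fib a).max' (hne a) with hr
    have hlr : ∀ a, l a ≤ r a := fun a => Finset.min'_le _ _ (Finset.max'_mem _ _)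
    have hmeml : ∀ a, (a, l a) ∈ I := fun a => (memfib _ _).mp (Finset.min'_mem _ _)
    have hmemr : ∀ a, (a, r a) ∈ I := fun a => (memfib _ _).mp (Finset.max'_mem _ _)
    have key : ∀ a b, (a, b) ∈ I ↔ l a ≤ b ∧ b ≤ r a := by
      intro a b
      constructor
      · intro h
        exact ⟨Finset.min'_le _ _ ((memfib _ _).mpr h), Finset.le_max' _ _ ((memfib _ _).mpr h)⟩
      · rintro ⟨h1, h2⟩
        rcases eq_or_lt_of_le h1 with h1 | h1
        · rw [← h1]; exact hmeml a
        · rcases eq_or_lt_of_le h2 with h2 | h2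
          · rw [h2]; exact hmemr a
          · exact hIC _ (hmeml a) _ (hmemr a) (a, b)
              (Prod.mk_lt_mk.mpr (Or.inr ⟨le_refl _, h1⟩))
              (Prod.mk_lt_mk.mpr (Or.inr ⟨le_refl _, h2⟩))
    have hal : Antitone l := by
      intro a a' haa'
      rcases eq_or_lt_of_le haa' with rfl | haa'
      · exact le_refl _
      · rcases lt_or_ge (r a') (l a) with hc | hc
        · exact le_of_lt (lt_of_le_of_lt (hlr a') hc)
        · refine Finset.min'_le _ _ ((memfib _ _).mpr ?_)
          rcases eq_or_lt_of_le hc with hc | hc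
          · rw [hc]; exact hmemr a'
          · exact hIC _ (hmeml a) _ (hmemr a') (a', l a)
              (Prod.mk_lt_mk.mpr (Or.inl ⟨haa', le_refl _⟩))
              (Prod.mk_lt_mk.mpr (Or.inr ⟨le_refl _, hc⟩))
    have har : Antitone r := by
      intro a a' haa'
      rcases eq_or_lt_of_le haa' with rfl | haa'
      · exact le_refl _
      · rcases lt_or_ge (r a') (l a) with hc | hc
        · exact le_of_lt (lt_of_lt_of_le hc (hlr a))
        · refine Finset.le_max' _ _ ((memfib _ _).mpr ?_)
          rcases eq_or_lt_of_le hc with hc | hc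
          · rw [← hc]; exact hmeml a
          · exact hIC _ (hmeml a) _ (hmemr a') (a, r a')
              (Prod.mk_lt_mk.mpr (Or.inr ⟨le_refl _, hc⟩))
              (Prod.mk_lt_mk.mpr (Or.inl ⟨haa', le_refl _⟩))
    refine ⟨(l, r), mem_pairSet.mpr ⟨hal, har, hlr, fun i => (l i).isLt, fun i => (r i).isLt⟩, ?_⟩
    ext q
    simp only [Finset.mem_filter, Finset.mem_univ, true_and]
    rw [← key q.1 q.2]


lemma key_id (M N : ℕ) :
    ((M + N + 3 : ℕ) : ℚ) *
        (((M + N + 2).choose (M + 1) : ℚ) * ((M + N + 2).choose (M + 1) : ℚ) -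
          ((M + N + 2).choose (M + 2) : ℚ) * ((M + N + 2).choose M : ℚ)) =
      ((M + N + 3).choose (N + 2) : ℚ) * ((M + N + 3).choose (N + 1) : ℚ) := by
  rw [Nat.cast_choose ℚ (show M + 1 ≤ M + N + 2 by omega),
    Nat.cast_choose ℚ (show M + 2 ≤ M + N + 2 by omega),
    Nat.cast_choose ℚ (show M ≤ M + N + 2 by omega),
    Nat.cast_choose ℚ (show N + 2 ≤ M + N + 3 by omega),
    Nat.cast_choose ℚ (show N + 1 ≤ M + N + 3 by omega),
    show M + N + 2 - (M + 1) = N + 1 by omega,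
    show M + N + 2 - (M + 2) = N by omega,
    show M + N + 2 - M = N + 2 by omega,
    show M + N + 3 - (N + 2) = M + 1 by omega,
    show M + N + 3 - (N + 1) = M + 2 by omega,
    show (M + 2 : ℕ) = (M + 1) + 1 from rfl,
    show (N + 2 : ℕ) = (N + 1) + 1 from rfl,
    show (M + N + 3 : ℕ) = (M + N + 2) + 1 from rfl]
  simp only [Nat.factorial_succ]
  push_cast
  have hM : ((M.factorial : ℚ)) ≠ 0 := Nat.cast_ne_zero.mpr (Nat.factorial_ne_zero M)
  have hN : ((N.factorial : ℚ)) ≠ 0 := Nat.cast_ne_zero.mpr (Nat.factorial_ne_zero N)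
  have hK : (((M + N + 2).factorial : ℚ)) ≠ 0 := Nat.cast_ne_zero.mpr (Nat.factorial_ne_zero _)
  field_simp
  ring

/-- The number of interval-closed sets of `[m] × [n]` containing at least one
element of the form `(a, b)` for each `a ∈ [m]` is the Narayana number
`N(m+n, n) = (1/(m+n))·C(m+n, n)·C(m+n, n−1)` (denominator cleared). -/
theorem card_ics_surjective_first_coord (m n : ℕ) (hm : 1 ≤ m) (hn : 1 ≤ n) :
    (m + n) * Nat.card {I : Finset (Fin m × Fin n) //
        IsIntervalClosed I ∧ ∀ a : Fin m, ∃ b : Fin n, (a, b) ∈ I} =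
      (m + n).choose n * (m + n).choose (n - 1) := by
  obtain ⟨M, rfl⟩ : ∃ M, m = M + 1 := ⟨m - 1, by omega⟩
  obtain ⟨N, rfl⟩ : ∃ N, n = N + 1 := ⟨n - 1, by omega⟩
  rw [card_ics_eq (M + 1) (N + 1)]
  have hcard : ((pairSet (N + 1) (M + 1) (N + 1) (N + 1)).card : ℤ) = narC M (N + 1) (N + 1) :=
    card_pairSet (N + 1) M (N + 1) (N + 1) le_rfl le_rfl le_rfl
  have hcardQ : ((pairSet (N + 1) (M + 1) (N + 1) (N + 1)).card : ℚ) =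
      ((narC M (N + 1) (N + 1) : ℤ) : ℚ) := by
    exact_mod_cast congrArg (fun z : ℤ => (z : ℚ)) hcard
  have key : ((M + 1 + (N + 1) : ℕ) : ℚ) * ((pairSet (N + 1) (M + 1) (N + 1) (N + 1)).card : ℚ)
      = ((M + 1 + (N + 1)).choose (N + 1) : ℚ) * ((M + 1 + (N + 1)).choose (N + 1 - 1) : ℚ) := by
    rw [hcardQ, show (N + 1 - 1 : ℕ) = N by omega, show (M + 1 + (N + 1) : ℕ) = M + N + 2 by omega]
    simp only [narC]
    push_cast
    rcases N with _ | N'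
    · rw [show (0 + 1 + M : ℕ) = M + 1 by omega]
      rw [Nat.choose_self, Nat.choose_eq_zero_of_lt (show M + 1 < M + 2 by omega)]
      rw [show (M + 0 + 2 : ℕ) = M + 2 by omega, Nat.choose_one_right, Nat.choose_zero_right]
      push_cast
      ring
    · rw [show (N' + 1 + 1 + M : ℕ) = M + N' + 2 by omega,
        show (M + (N' + 1) + 2 : ℕ) = M + N' + 3 by omega]
      have h := key_id M N'
      rw [show (N' + 1 + 1 : ℕ) = N' + 2 from rfl]
      push_cast at h ⊢
      linarith [h]
  exact_mod_cast key
end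

section
/- Let P be a full interval-closed set of [m]×[n] viewed as a subposet, let I be an interval-closed set of P with lower path L and upper path U. Then: the elements above L and below U are exactly those in I; the elements below both L and U are exactly Δ(I) \ I; the elements above both L and U are exactly ∇(I) \ I; and the elements below L and above U are exactly those incomparable with every element of I. -/
/-- A lattice path from `(0,n)` to `(m+n,m)` with steps `(1,1)` and `(1,-1)`,
encoded by its heights at the integer points `0,…,m+n`. -/
def IsGridPath (m n : ℕ) (p : ℕ → ℤ) : Prop :=
  p 0 = n ∧ p (m + n) = m ∧ ∀ i < m + n, p (i + 1) = p i + 1 ∨ p (i + 1) = p i - 1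

/-- The x-coordinate of the poset element `(a,b) = (e.1+1, e.2+1)` of `[m]×[n]`
in the Cartesian coordinates used for the lattice paths: `a - b + n`. -/
def elemX {m n : ℕ} (e : Fin m × Fin n) : ℕ := e.1.1 + (n - e.2.1)

/-- The y-coordinate of the element `(a,b)`: `a + b - 1`. -/
def elemY {m n : ℕ} (e : Fin m × Fin n) : ℕ := e.1.1 + e.2.1 + 1

/-- `U` is the upper path of `I`: the lowest grid path leaving all elements of `I`
below it. -/
def IsUpperPath (m n : ℕ) (I : Finset (Fin m × Fin n)) (U : ℕ → ℤ) : Prop :=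
  IsGridPath m n U ∧ (∀ e ∈ I, (elemY e : ℤ) < U (elemX e)) ∧
    ∀ q : ℕ → ℤ, IsGridPath m n q → (∀ e ∈ I, (elemY e : ℤ) < q (elemX e)) →
      ∀ i ≤ m + n, U i ≤ q i

/-- `L` is the lower path of `I`: the highest grid path leaving all elements of `I`
above it. -/
def IsLowerPath (m n : ℕ) (I : Finset (Fin m × Fin n)) (L : ℕ → ℤ) : Prop :=
  IsGridPath m n L ∧ (∀ e ∈ I, L (elemX e) < (elemY e : ℤ)) ∧
    ∀ q : ℕ → ℤ, IsGridPath m n q → (∀ e ∈ I, q (elemX e) < (elemY e : ℤ)) →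
      ∀ i ≤ m + n, q i ≤ L i

/-- `I` is full if its lower and upper paths share no points other than their
endpoints. -/
def IsFull (m n : ℕ) (I : Finset (Fin m × Fin n)) : Prop :=
  ∀ L U : ℕ → ℤ, IsLowerPath m n I L → IsUpperPath m n I U →
    ∀ i : ℕ, 0 < i → i < m + n → L i ≠ U i

/-!
In the coordinates `(x, y) = (a - b + n, a + b - 1)` of an element `(a, b)`, one has `e ≤ z`
exactly when `z` lies in the upward light cone `|x_z - x_e| ≤ y_z - y_e` of `e`; grid paths are
1-Lipschitz, and by parity no grid path passes through the point of an element. So `z` lies below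
the upper path `U` iff `z ∈ Δ(I)`: if `z ≤ e ∈ I`, the Lipschitz bound at `x_e` keeps `U` above
`z`; otherwise the pointwise maximum of the lowest grid paths above the elements of `I` is a grid
path above `I` that passes below `z`, and `U` lies under it. Reversing the order of `[m]×[n]`
reflects grid paths and turns lower paths into upper paths, so dually `z` lies above `L` iff
`z ∈ ∇(I)`. Since `I` is interval-closed in `P`, an element of `P` lies in `I` iff it lies in
`Δ(I) ∩ ∇(I)`, and the four claims follow.
-/

theorem Finset.mem_iff_exists_le_and_exists_ge {α : Type*} [PartialOrder α]
    {P I : Finset α} (hI : ∀ x ∈ I, ∀ y ∈ I, ∀ z ∈ P, x < z → z < y → z ∈ I)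
    {z : α} (hz : z ∈ P) :
    z ∈ I ↔ (∃ x ∈ I, x ≤ z) ∧ ∃ y ∈ I, z ≤ y := by
  refine ⟨fun h => ⟨⟨z, h, le_rfl⟩, z, h, le_rfl⟩, ?_⟩
  rintro ⟨⟨x, hx, hxz⟩, y, hy, hzy⟩
  rcases hxz.eq_or_lt with rfl | hxz
  · exact hx
  rcases hzy.eq_or_lt with rfl | hzy
  · exact hy
  exact hI x hx y hy z hz hxz hzy

section Coordinates

variable {m n : ℕ}

theorem elemX_le (z : Fin m × Fin n) : elemX z ≤ m + n := by
  have := z.1.isLt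
  have := z.2.isLt
  simp only [elemX]
  omega

theorem le_iff_abs_elemX_sub_le {e z : Fin m × Fin n} :
    e ≤ z ↔ |(elemX z : ℤ) - elemX e| ≤ (elemY z : ℤ) - elemY e := by
  have := e.2.isLt
  have := z.2.isLt
  rw [Prod.le_def, Fin.le_def, Fin.le_def, abs_sub_le_iff]
  simp only [elemX, elemY]
  omega

theorem abs_elemX_sub_lt_elemY (z : Fin m × Fin n) : |(elemX z : ℤ) - n| < elemY z := by
  have := z.2.isLt
  rw [abs_sub_lt_iff]
  simp only [elemX, elemY]
  omega

theorem elemX_map_rev (e : Fin m × Fin n) :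
    elemX (Prod.map Fin.rev Fin.rev e) = m + n - elemX e := by
  have := e.1.isLt
  have := e.2.isLt
  simp only [elemX, Prod.map_fst, Prod.map_snd, Fin.val_rev]
  omega

theorem elemY_map_rev (e : Fin m × Fin n) :
    (elemY (Prod.map Fin.rev Fin.rev e) : ℤ) = m + n - elemY e := by
  have := e.1.isLt
  have := e.2.isLt
  simp only [elemY, Prod.map_fst, Prod.map_snd, Fin.val_rev]
  omega

theorem map_rev_le_map_rev {e z : Fin m × Fin n} :
    Prod.map Fin.rev Fin.rev e ≤ Prod.map Fin.rev Fin.rev z ↔ z ≤ e := by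
  simp only [Prod.le_def, Prod.map_fst, Prod.map_snd, Fin.rev_le_rev]

end Coordinates

namespace IsGridPath

variable {m n : ℕ} {p q : ℕ → ℤ}

theorem emod_two (hp : IsGridPath m n p) {i : ℕ} (hi : i ≤ m + n) : p i % 2 = (n + i) % 2 := by
  induction i with
  | zero => simp [hp.1]
  | succ i ih =>
    have := ih (by omega)
    have := hp.2.2 i (by omega)
    push_cast
    omega

theorem ne_elemY (hp : IsGridPath m n p) (z : Fin m × Fin n) : p (elemX z) ≠ elemY z := by
  have := hp.emod_two (elemX_le z)
  have := z.2.isLt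
  simp only [elemX, elemY] at *
  omega

theorem abs_sub_le_of_le (hp : IsGridPath m n p) {i j : ℕ} (hij : i ≤ j) (hj : j ≤ m + n) :
    |p j - p i| ≤ j - i := by
  obtain ⟨d, rfl⟩ := Nat.exists_eq_add_of_le hij
  induction d with
  | zero => simp
  | succ d ih =>
    have := ih (by omega) (by omega)
    have := hp.2.2 (i + d) (by omega)
    rw [abs_le] at *
    push_cast [← add_assoc] at *
    omega

theorem abs_sub_le (hp : IsGridPath m n p) {i j : ℕ} (hi : i ≤ m + n) (hj : j ≤ m + n) :
    |p j - p i| ≤ |(j : ℤ) - i| := by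
  rcases le_total i j with h | h
  · exact (hp.abs_sub_le_of_le h hj).trans (le_abs_self _)
  · rw [abs_sub_comm, abs_sub_comm (j : ℤ)]
    exact (hp.abs_sub_le_of_le h hi).trans (le_abs_self _)

theorem max (hp : IsGridPath m n p) (hq : IsGridPath m n q) :
    IsGridPath m n fun i => max (p i) (q i) := by
  refine ⟨by simp [hp.1, hq.1], by simp [hp.2.1, hq.2.1], fun i hi => ?_⟩
  have := hp.emod_two hi.le
  have := hq.emod_two hi.le
  have := hp.2.2 i hi
  have := hq.2.2 i hi
  dsimp only
  omega

end IsGridPath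

section PathAbove

variable {m n : ℕ}

theorem isGridPath_abs_sub : IsGridPath m n fun j => |(j : ℤ) - n| := by
  refine ⟨by simp, by simp, fun i _ => ?_⟩
  simp only [abs_eq_max_neg]
  push_cast
  omega

/-- The lowest grid path passing strictly above `e`. -/
def pathAbove (e : Fin m × Fin n) (j : ℕ) : ℤ :=
  max |(j : ℤ) - n| (elemY e + 1 - |(j : ℤ) - elemX e|)

theorem isGridPath_pathAbove (e : Fin m × Fin n) : IsGridPath m n (pathAbove e) := by
  have := e.1.isLt
  have := e.2.isLt
  refine ⟨?_, ?_, fun i _ => ?_⟩ <;>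
  · simp only [pathAbove, elemX, elemY, abs_eq_max_neg]
    push_cast
    omega

theorem elemY_lt_pathAbove (e : Fin m × Fin n) : (elemY e : ℤ) < pathAbove e (elemX e) := by
  simp [pathAbove]

theorem pathAbove_lt_elemY {e z : Fin m × Fin n} (h : ¬ z ≤ e) :
    pathAbove e (elemX z) < elemY z := by
  have := abs_elemX_sub_lt_elemY z
  have := e.2.isLt
  have := z.2.isLt
  rw [le_iff_abs_elemX_sub_le] at h
  simp only [pathAbove, elemX, elemY, abs_eq_max_neg] at *
  omega

theorem exists_isGridPath_above_of_forall_not_le (z : Fin m × Fin n)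
    (S : Finset (Fin m × Fin n)) (hS : ∀ e ∈ S, ¬ z ≤ e) :
    ∃ q, IsGridPath m n q ∧ (∀ e ∈ S, (elemY e : ℤ) < q (elemX e)) ∧
      q (elemX z) < elemY z := by
  induction S using Finset.induction_on with
  | empty => exact ⟨_, isGridPath_abs_sub, by simp, abs_elemX_sub_lt_elemY z⟩
  | insert e S _ ih =>
    rw [Finset.forall_mem_insert] at hS
    obtain ⟨q, hq, hqS, hqz⟩ := ih hS.2
    refine ⟨fun j => max (pathAbove e j) (q j), (isGridPath_pathAbove e).max hq, ?_,
      max_lt (pathAbove_lt_elemY hS.1) hqz⟩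
    rw [Finset.forall_mem_insert]
    exact ⟨lt_max_of_lt_left (elemY_lt_pathAbove e),
      fun e' he' => lt_max_of_lt_right (hqS e' he')⟩

end PathAbove

namespace IsUpperPath

variable {m n : ℕ} {I : Finset (Fin m × Fin n)} {U : ℕ → ℤ}

theorem elemY_lt_iff (hU : IsUpperPath m n I U) (z : Fin m × Fin n) :
    (elemY z : ℤ) < U (elemX z) ↔ ∃ e ∈ I, z ≤ e := by
  constructor
  · intro hz
    by_contra! h
    obtain ⟨q, hq, hqI, hqz⟩ := exists_isGridPath_above_of_forall_not_le z I h
    have := hU.2.2 q hq hqI (elemX z) (elemX_le z)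
    omega
  · rintro ⟨e, he, hze⟩
    have hLip := abs_le.mp (hU.1.abs_sub_le (elemX_le e) (elemX_le z))
    rw [le_iff_abs_elemX_sub_le, abs_sub_comm] at hze
    calc (elemY z : ℤ) ≤ elemY e - |(elemX z : ℤ) - elemX e| := by linarith
      _ < U (elemX e) - |(elemX z : ℤ) - elemX e| := by linarith [hU.2.1 e he]
      _ ≤ U (elemX z) := by linarith

theorem lt_elemY_iff (hU : IsUpperPath m n I U) (z : Fin m × Fin n) :
    U (elemX z) < elemY z ↔ ¬ ∃ e ∈ I, z ≤ e := by
  rw [← hU.elemY_lt_iff, not_lt, lt_iff_le_and_ne, and_iff_left (hU.1.ne_elemY z)]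

end IsUpperPath

/-- Reversing the order of `[m]×[n]` moves the point `(x, y)` of an element to
`(m + n - x, m + n - y)`; this is the induced map on paths. -/
def reflectPath (m n : ℕ) (p : ℕ → ℤ) (j : ℕ) : ℤ := m + n - p (m + n - j)

theorem IsGridPath.reflect {m n : ℕ} {p : ℕ → ℤ} (hp : IsGridPath m n p) :
    IsGridPath m n (reflectPath m n p) := by
  refine ⟨by simp [reflectPath, hp.2.1], by simp [reflectPath, hp.1], fun i hi => ?_⟩
  have := hp.2.2 (m + n - (i + 1)) (by omega)
  rw [show m + n - (i + 1) + 1 = m + n - i by omega] at this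
  simp only [reflectPath]
  omega

namespace IsLowerPath

variable {m n : ℕ} {I : Finset (Fin m × Fin n)} {L : ℕ → ℤ}

theorem reflect (hL : IsLowerPath m n I L) :
    IsUpperPath m n (I.image (Prod.map Fin.rev Fin.rev)) (reflectPath m n L) := by
  refine ⟨hL.1.reflect, ?_, fun q hq hqI i hi => ?_⟩
  · simp only [Finset.forall_mem_image, reflectPath, elemX_map_rev, elemY_map_rev,
      Nat.sub_sub_self (elemX_le _)]
    intro e he
    linarith [hL.2.1 e he]
  · have hq' : ∀ e ∈ I, reflectPath m n q (elemX e) < elemY e := by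
      intro e he
      have := hqI _ (Finset.mem_image_of_mem _ he)
      rw [elemX_map_rev, elemY_map_rev] at this
      simp only [reflectPath]
      linarith
    have := hL.2.2 _ hq.reflect hq' (m + n - i) (by omega)
    simp only [reflectPath, Nat.sub_sub_self hi] at this ⊢
    linarith

theorem lt_elemY_iff (hL : IsLowerPath m n I L) (z : Fin m × Fin n) :
    L (elemX z) < elemY z ↔ ∃ e ∈ I, e ≤ z := by
  simpa only [reflectPath, elemX_map_rev, elemY_map_rev, Nat.sub_sub_self (elemX_le z),
    Finset.exists_mem_image, map_rev_le_map_rev, sub_lt_sub_iff_left]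
    using hL.reflect.elemY_lt_iff (Prod.map Fin.rev Fin.rev z)

theorem elemY_lt_iff (hL : IsLowerPath m n I L) (z : Fin m × Fin n) :
    elemY z < L (elemX z) ↔ ¬ ∃ e ∈ I, e ≤ z := by
  rw [← hL.lt_elemY_iff, not_lt, lt_iff_le_and_ne, and_iff_left (hL.1.ne_elemY z).symm]

end IsLowerPath

theorem paths_in_poset_language_general (m n : ℕ) (P : Finset (Fin m × Fin n))
    (I : Finset (Fin m × Fin n))
    (hI : ∀ x ∈ I, ∀ y ∈ I, ∀ z ∈ P, x < z → z < y → z ∈ I)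
    (L U : ℕ → ℤ) (hL : IsLowerPath m n I L) (hU : IsUpperPath m n I U) :
    ∀ z ∈ P,
      (z ∈ I ↔ L (elemX z) < (elemY z : ℤ) ∧ (elemY z : ℤ) < U (elemX z)) ∧
      (((∃ x ∈ I, z ≤ x) ∧ z ∉ I) ↔
        (elemY z : ℤ) < L (elemX z) ∧ (elemY z : ℤ) < U (elemX z)) ∧
      (((∃ x ∈ I, x ≤ z) ∧ z ∉ I) ↔
        L (elemX z) < (elemY z : ℤ) ∧ U (elemX z) < (elemY z : ℤ)) ∧
      ((∀ x ∈ I, ¬ x ≤ z ∧ ¬ z ≤ x) ↔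
        (elemY z : ℤ) < L (elemX z) ∧ U (elemX z) < (elemY z : ℤ)) := by
  intro z hz
  rw [hL.lt_elemY_iff, hL.elemY_lt_iff, hU.lt_elemY_iff, hU.elemY_lt_iff,
    Finset.mem_iff_exists_le_and_exists_ge hI hz]
  grind

/-- Let `P` be a full interval-closed set of `[m]×[n]` viewed as a subposet, and
let `I` be an interval-closed set of `P` with lower path `L` and upper path `U`.
Then the elements of `P` above `L` and below `U` are exactly those of `I`; those
below both `L` and `U` are exactly `Δ(I) \ I`; those above both are exactly
`∇(I) \ I`; and those below `L` and above `U` are exactly the elements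
incomparable with every element of `I`. -/
theorem paths_in_poset_language (m n : ℕ) (P : Finset (Fin m × Fin n))
    (hPics : IsIntervalClosed P) (hPfull : IsFull m n P)
    (I : Finset (Fin m × Fin n)) (hIP : I ⊆ P)
    (hI : ∀ x ∈ I, ∀ y ∈ I, ∀ z ∈ P, x < z → z < y → z ∈ I)
    (L U : ℕ → ℤ) (hL : IsLowerPath m n I L) (hU : IsUpperPath m n I U) :
    ∀ z ∈ P,
      (z ∈ I ↔ L (elemX z) < (elemY z : ℤ) ∧ (elemY z : ℤ) < U (elemX z)) ∧
      (((∃ x ∈ I, z ≤ x) ∧ z ∉ I) ↔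
        (elemY z : ℤ) < L (elemX z) ∧ (elemY z : ℤ) < U (elemX z)) ∧
      (((∃ x ∈ I, x ≤ z) ∧ z ∉ I) ↔
        L (elemX z) < (elemY z : ℤ) ∧ U (elemX z) < (elemY z : ℤ)) ∧
      ((∀ x ∈ I, ¬ x ≤ z ∧ ¬ z ≤ x) ↔
        (elemY z : ℤ) < L (elemX z) ∧ U (elemX z) < (elemY z : ℤ)) :=
  paths_in_poset_language_general m n P I hI L U hL hU
end

section
/- Under the bijection between interval-closed sets of [m]×[n] and restricted bicolored Motzkin paths, the cardinality of the interval-closed set I equals the sum over i of the height of the corresponding Motzkin path M after i steps. -/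
/-- Steps of a bicolored Motzkin path: up, down, and two colors of horizontal steps. -/
inductive BMStep : Type
  | u : BMStep
  | d : BMStep
  | h1 : BMStep
  | h2 : BMStep
  deriving DecidableEq

/-- Vertical displacement of a step. -/
def BMStep.wt : BMStep → ℤ
  | .u => 1
  | .d => -1
  | _ => 0

/-- Height of the path `M` after its first `k` steps. -/
def hgt (M : List BMStep) (k : ℕ) : ℤ := ((M.take k).map BMStep.wt).sum

/-- `M` is a bicolored Motzkin path: it never goes below the x-axis and ends at height 0. -/
def IsBMPath (M : List BMStep) : Prop :=
  (∀ k : ℕ, 0 ≤ hgt M k) ∧ hgt M M.length = 0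

/-- No `h₂` step at height 0 (on the x-axis) is immediately followed by an `h₁` step. -/
def NoH2ThenH1 (M : List BMStep) : Prop :=
  ∀ k : ℕ, ¬ (hgt M k = 0 ∧ M[k]? = some BMStep.h2 ∧ M[k + 1]? = some BMStep.h1)


namespace ICS

def pT : BMStep → Bool := fun s => s == .u || s == .h1
def pB : BMStep → Bool := fun s => s == .d || s == .h1

lemma wt_sum (l : List BMStep) :
    (l.map BMStep.wt).sum = (l.countP pT : ℤ) - (l.countP pB : ℤ) := by
  induction l with
  | nil => simp
  | cons s t ih =>
    simp only [List.map_cons, List.sum_cons, List.countP_cons, ih]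
    rcases s <;> simp [BMStep.wt, pT, pB] <;> push_cast <;> ring

lemma length_eq_counts (l : List BMStep) :
    l.length = l.count .u + l.count .d + l.count .h1 + l.count .h2 := by
  induction l with
  | nil => simp
  | cons s t ih =>
    rcases s <;> simp [List.count_cons, ih] <;> omega

lemma countP_pT_eq (l : List BMStep) : l.countP pT = l.count .u + l.count .h1 := by
  induction l with
  | nil => simp
  | cons s t ih => rcases s <;> simp [List.count_cons, List.countP_cons, pT, ih] <;> omega

lemma countP_pB_eq (l : List BMStep) : l.countP pB = l.count .d + l.count .h1 := by
  induction l with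
  | nil => simp
  | cons s t ih => rcases s <;> simp [List.count_cons, List.countP_cons, pB, ih] <;> omega

lemma hgt_eq_countP (M : List BMStep) (K : ℕ) :
    hgt M K = ((M.take K).countP pT : ℤ) - ((M.take K).countP pB : ℤ) := wt_sum _

/-- bridge: countP as a card of a range filter via `getD`. -/
lemma countP_eq_card (l : List BMStep) (p : BMStep → Bool) :
    l.countP p =
      ((Finset.range l.length).filter (fun k => p (l.getD k .h2) = true)).card := by
  induction l using List.reverseRecOn with
  | nil => simp
  | append_singleton t x ih =>
    rw [List.countP_append, List.length_append, List.countP_singleton]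
    simp only [List.length_singleton, Finset.range_add_one, Finset.filter_insert]
    have hgd : ∀ k < t.length, (t ++ [x]).getD k .h2 = t.getD k .h2 := by
      intro k hk; exact List.getD_append _ _ _ _ hk
    have hfil : (Finset.range t.length).filter
          (fun k => p ((t ++ [x]).getD k .h2) = true) =
        (Finset.range t.length).filter (fun k => p (t.getD k .h2) = true) := by
      apply Finset.filter_congr
      intro k hk
      rw [hgd k (Finset.mem_range.mp hk)]
    have hx : (t ++ [x]).getD t.length .h2 = x := by
      simp [List.getD, List.getElem?_append_right]
    rw [hx]
    by_cases hpx : p x = true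
    · rw [if_pos hpx, if_pos hpx, Finset.card_insert_of_notMem (by simp), hfil, ih]
    · rw [if_neg hpx, if_neg hpx, hfil, ih]; omega
section SubsetLemma

variable (N mS : ℕ) (S : Finset ℕ)

/-- number of elements of `S` below `k`. -/
def csF (S : Finset ℕ) (k : ℕ) : ℕ := (S.filter (· < k)).card

/-- the monotone function whose "position set" is `S`. -/
def fSF (N : ℕ) (S : Finset ℕ) (a : ℕ) : ℕ :=
  (((Finset.range N) \ S).filter (fun k => csF S k ≤ a)).card

lemma csF_mono (S : Finset ℕ) : Monotone (csF S) := by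
  intro k1 k2 h
  apply Finset.card_le_card
  intro x hx
  simp only [Finset.mem_filter] at *
  exact ⟨hx.1, lt_of_lt_of_le hx.2 h⟩

lemma fSF_mono : Monotone (fSF N S) := by
  intro a1 a2 h
  apply Finset.card_le_card
  intro x hx
  simp only [Finset.mem_filter] at *
  exact ⟨hx.1, le_trans hx.2 h⟩

lemma csF_le_card (k : ℕ) : csF S k ≤ S.card := Finset.card_le_card (Finset.filter_subset _ _)

lemma csF_lt_of_mem {j : ℕ} (hj : j ∈ S) : csF S j < S.card := by
  apply Finset.card_lt_card
  constructor
  · exact Finset.filter_subset _ _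
  · intro hsub
    have := hsub hj
    simp at this

lemma csF_succ_of_mem {j : ℕ} (hj : j ∈ S) : csF S (j + 1) = csF S j + 1 := by
  have : S.filter (· < j + 1) = insert j (S.filter (· < j)) := by
    ext k
    simp only [Finset.mem_filter, Finset.mem_insert]
    constructor
    · rintro ⟨hk, hlt⟩
      rcases Nat.lt_succ_iff_lt_or_eq.mp hlt with h | h
      · exact Or.inr ⟨hk, h⟩
      · exact Or.inl h
    · rintro (rfl | ⟨hk, hlt⟩)
      · exact ⟨hj, Nat.lt_succ_self _⟩
      · exact ⟨hk, Nat.lt_succ_of_lt hlt⟩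
  rw [csF, csF, this, Finset.card_insert_of_notMem (by simp)]

lemma fSF_of_le (hS : S ⊆ Finset.range N) (a : ℕ) (ha : S.card ≤ a) : fSF N S a = N - S.card := by
  rw [fSF, Finset.filter_true_of_mem, Finset.card_sdiff_of_subset hS, Finset.card_range]
  intro k _
  exact le_trans (csF_le_card S k) ha

lemma fSF_le (hS : S ⊆ Finset.range N) (a : ℕ) : fSF N S a ≤ N - S.card := by
  calc fSF N S a ≤ ((Finset.range N) \ S).card := Finset.card_le_card (Finset.filter_subset _ _)
  _ = N - S.card := by rw [Finset.card_sdiff_of_subset hS, Finset.card_range]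

lemma csF_add_fSF (hS : S ⊆ Finset.range N) {j : ℕ} (hj : j ∈ S) : csF S j + fSF N S (csF S j) = j := by
  have hset : ((Finset.range N) \ S).filter (fun k => csF S k ≤ csF S j)
      = (Finset.range j) \ S := by
    ext k
    simp only [Finset.mem_filter, Finset.mem_sdiff, Finset.mem_range]
    constructor
    · rintro ⟨⟨hkN, hkS⟩, hle⟩
      refine ⟨?_, hkS⟩
      by_contra hk
      push_neg at hk
      have hkj : j < k := lt_of_le_of_ne hk (fun h => hkS (h ▸ hj))
      have : csF S (j+1) ≤ csF S k := csF_mono S hkj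
      rw [csF_succ_of_mem S hj] at this
      omega
    · rintro ⟨hkj, hkS⟩
      have hjN : j < N := Finset.mem_range.mp (hS hj)
      exact ⟨⟨by omega, hkS⟩, csF_mono S (le_of_lt hkj)⟩
  have hcard : ((Finset.range j) \ S).card = j - csF S j := by
    have : (Finset.range j) \ S = (Finset.range j) \ (S.filter (· < j)) := by
      ext k
      simp only [Finset.mem_sdiff, Finset.mem_range, Finset.mem_filter]
      tauto
    rw [this, Finset.card_sdiff_of_subset, Finset.card_range, csF]
    intro k hk
    simp only [Finset.mem_filter] at hk
    exact Finset.mem_range.mpr hk.2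
  have hle : csF S j ≤ j := by
    calc csF S j ≤ (Finset.range j).card := by
          apply Finset.card_le_card
          intro k hk
          simp only [Finset.mem_filter] at hk
          exact Finset.mem_range.mpr hk.2
    _ = j := Finset.card_range j
  rw [fSF, hset, hcard]
  omega

lemma posSet_fSF (hS : S ⊆ Finset.range N) (hcard : S.card = mS) :
    (Finset.range mS).image (fun a => a + fSF N S a) = S := by
  have hsub : S ⊆ (Finset.range mS).image (fun a => a + fSF N S a) := by
    intro j hj
    simp only [Finset.mem_image, Finset.mem_range]
    refine ⟨csF S j, hcard ▸ csF_lt_of_mem S hj, csF_add_fSF N S hS hj⟩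
  exact (Finset.eq_of_subset_of_card_le hsub
    (le_trans Finset.card_image_le (by rw [Finset.card_range, hcard]))).symm

lemma pos_strictMono {F : ℕ → ℕ} (hF : Monotone F) {a1 a2 : ℕ} (h : a1 < a2) :
    a1 + F a1 < a2 + F a2 := by
  have := hF (le_of_lt h)
  omega

lemma csF_posSet (hS : S ⊆ Finset.range N) (hcard : S.card = mS) {a : ℕ} (ha : a < mS) :
    a + fSF N S a ∈ S ∧ csF S (a + fSF N S a) = a := by
  have hmem : a + fSF N S a ∈ S := by
    have h7 : a + fSF N S a ∈ (Finset.range mS).image (fun a => a + fSF N S a) :=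
      Finset.mem_image_of_mem _ (Finset.mem_range.mpr ha)
    rwa [posSet_fSF N mS S hS hcard] at h7
  refine ⟨hmem, ?_⟩
  set a' := csF S (a + fSF N S a) with ha'
  have h1 : a' + fSF N S a' = a + fSF N S a := csF_add_fSF N S hS hmem
  have ha'lt : a' < mS := hcard ▸ csF_lt_of_mem S hmem
  rcases lt_trichotomy a a' with h | h | h
  · exact absurd h1 (ne_of_gt (pos_strictMono (fSF_mono N S) h))
  · exact h.symm
  · exact absurd h1 (ne_of_lt (pos_strictMono (fSF_mono N S) h))

/-- two monotone functions with the same position set agree below `mS`. -/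
lemma monotone_posSet_eq {F1 F2 : ℕ → ℕ} (h1 : Monotone F1) (h2 : Monotone F2)
    (h : (Finset.range mS).image (fun a => a + F1 a) =
         (Finset.range mS).image (fun a => a + F2 a)) :
    ∀ a < mS, F1 a = F2 a := by
  intro a
  induction a using Nat.strong_induction_on with
  | _ a ih =>
    intro ha
    have key : ∀ (G1 G2 : ℕ → ℕ), Monotone G1 → Monotone G2 →
        (Finset.range mS).image (fun a => a + G1 a) =
          (Finset.range mS).image (fun a => a + G2 a) →
        (∀ b < a, G1 b = G2 b) → G2 a ≤ G1 a := by
      intro G1 G2 hG1 hG2 hEq hpre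
      have hmem : a + G1 a ∈ (Finset.range mS).image (fun b => b + G2 b) := by
        rw [← hEq]; exact Finset.mem_image_of_mem _ (Finset.mem_range.mpr ha)
      simp only [Finset.mem_image, Finset.mem_range] at hmem
      obtain ⟨a', ha', heq⟩ := hmem
      rcases lt_trichotomy a' a with h' | rfl | h'
      · rw [← hpre a' h'] at heq
        exact absurd heq.symm (ne_of_gt (pos_strictMono hG1 h'))
      · omega
      · have := pos_strictMono hG2 h'
        omega
    have hle1 := key F1 F2 h1 h2 h (fun b hb => ih b hb (lt_trans hb ha))
    have hle2 := key F2 F1 h2 h1 h.symm (fun b hb => (ih b hb (lt_trans hb ha)).symm)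
    omega

end SubsetLemma
/-! ### positions of a monotone function, and the path construction -/

def posSet (m : ℕ) (F : ℕ → ℕ) : Finset ℕ := (Finset.range m).image fun a => a + F a

def Pred (m n : ℕ) (q : (ℕ → ℕ) × (ℕ → ℕ)) : Prop :=
  Monotone q.1 ∧ Monotone q.2 ∧ (∀ a, q.1 a ≤ q.2 a) ∧
  (∀ a, m ≤ a → q.1 a = n ∧ q.2 a = n) ∧
  (0 < m → q.1 0 = q.2 0 → q.2 0 = 0) ∧
  (∀ a, a + 1 < m → q.1 (a+1) = q.2 (a+1) → q.2 (a+1) = q.2 a)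

lemma mem_posSet {m : ℕ} {F : ℕ → ℕ} {k : ℕ} :
    k ∈ posSet m F ↔ ∃ a < m, a + F a = k := by
  simp [posSet]

lemma card_posSet {m : ℕ} {F : ℕ → ℕ} (hF : Monotone F) : (posSet m F).card = m := by
  rw [posSet, Finset.card_image_of_injOn, Finset.card_range]
  intro a1 _ a2 _ h
  by_contra hne
  rcases lt_or_gt_of_ne hne with h' | h'
  · exact absurd h (ne_of_lt (pos_strictMono hF h'))
  · exact absurd h (ne_of_gt (pos_strictMono hF h'))

lemma csF_posSet_eq {m : ℕ} {F : ℕ → ℕ} (hF : Monotone F) (K : ℕ) :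
    csF (posSet m F) K = ((Finset.range m).filter fun a => a + F a < K).card := by
  rw [csF]
  have : (posSet m F).filter (· < K) =
      ((Finset.range m).filter fun a => a + F a < K).image (fun a => a + F a) := by
    ext k
    simp only [Finset.mem_filter, Finset.mem_image, mem_posSet, Finset.mem_range]
    constructor
    · rintro ⟨⟨a, ha, rfl⟩, hlt⟩
      exact ⟨a, ⟨ha, hlt⟩, rfl⟩
    · rintro ⟨a, ⟨ha, hlt⟩, rfl⟩
      exact ⟨⟨a, ha, rfl⟩, hlt⟩
  rw [this, Finset.card_image_of_injOn]
  intro a1 _ a2 _ h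
  by_contra hne
  rcases lt_or_gt_of_ne hne with h' | h'
  · exact absurd h (ne_of_lt (pos_strictMono hF h'))
  · exact absurd h (ne_of_gt (pos_strictMono hF h'))

lemma posSet_subset {m n : ℕ} {F : ℕ → ℕ} (hFn : ∀ a, a < m → F a ≤ n) :
    posSet m F ⊆ Finset.range (m + n) := by
  intro k hk
  rw [mem_posSet] at hk
  obtain ⟨a, ha, rfl⟩ := hk
  have := hFn a ha
  rw [Finset.mem_range]
  omega

/-- the step of the constructed path at position `k`. -/
def stepAt (m : ℕ) (q : (ℕ → ℕ) × (ℕ → ℕ)) (k : ℕ) : BMStep :=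
  if k ∈ posSet m q.1 then (if k ∈ posSet m q.2 then .h1 else .u)
  else (if k ∈ posSet m q.2 then .d else .h2)

def pathOf (m n : ℕ) (q : (ℕ → ℕ) × (ℕ → ℕ)) : List BMStep :=
  List.ofFn (fun k : Fin (m + n) => stepAt m q (k : ℕ))

lemma length_pathOf (m n : ℕ) (q : (ℕ → ℕ) × (ℕ → ℕ)) :
    (pathOf m n q).length = m + n := by simp [pathOf]

lemma get?_pathOf {m n : ℕ} (q : (ℕ → ℕ) × (ℕ → ℕ)) {k : ℕ} (hk : k < m + n) :
    (pathOf m n q)[k]? = some (stepAt m q k) := by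
  rw [pathOf]
  simp [List.getElem?_ofFn, hk]

lemma getD_pathOf {m n : ℕ} (q : (ℕ → ℕ) × (ℕ → ℕ)) {k : ℕ} (hk : k < m + n) :
    (pathOf m n q).getD k .h2 = stepAt m q k := by
  rw [List.getD_eq_getElem?_getD, get?_pathOf q hk]
  rfl

lemma pT_stepAt {m : ℕ} (q : (ℕ → ℕ) × (ℕ → ℕ)) (k : ℕ) :
    pT (stepAt m q k) = true ↔ k ∈ posSet m q.1 := by
  by_cases h1 : k ∈ posSet m q.1 <;> by_cases h2 : k ∈ posSet m q.2 <;>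
    simp [stepAt, h1, h2, pT]

lemma pB_stepAt {m : ℕ} (q : (ℕ → ℕ) × (ℕ → ℕ)) (k : ℕ) :
    pB (stepAt m q k) = true ↔ k ∈ posSet m q.2 := by
  by_cases h1 : k ∈ posSet m q.1 <;> by_cases h2 : k ∈ posSet m q.2 <;>
    simp [stepAt, h1, h2, pB]

/-! ### the `T`- and `B`-position sets of an arbitrary path -/

def SFof (M : List BMStep) : Finset ℕ :=
  (Finset.range M.length).filter (fun k => pT (M.getD k .h2) = true)

def SBof (M : List BMStep) : Finset ℕ :=
  (Finset.range M.length).filter (fun k => pB (M.getD k .h2) = true)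

lemma card_SFof (M : List BMStep) : (SFof M).card = M.countP pT :=
  (countP_eq_card M pT).symm

lemma card_SBof (M : List BMStep) : (SBof M).card = M.countP pB :=
  (countP_eq_card M pB).symm

lemma getD_take {α : Type*} (l : List α) (d : α) {K k : ℕ} (hk : k < K) :
    (l.take K).getD k d = l.getD k d := by
  rw [List.getD_eq_getElem?_getD, List.getD_eq_getElem?_getD, List.getElem?_take_of_lt hk]

lemma csF_SFof {M : List BMStep} {K : ℕ} (hK : K ≤ M.length) :
    csF (SFof M) K = (M.take K).countP pT := by
  rw [countP_eq_card (M.take K) pT, csF]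
  have hlen : (M.take K).length = K := by
    rw [List.length_take]; omega
  rw [hlen]
  congr 1
  ext k
  simp only [SFof, Finset.mem_filter, Finset.mem_range]
  constructor
  · rintro ⟨⟨hkl, hp⟩, hkK⟩
    exact ⟨hkK, by rwa [getD_take _ _ hkK]⟩
  · rintro ⟨hkK, hp⟩
    exact ⟨⟨by omega, by rwa [getD_take _ _ hkK] at hp⟩, hkK⟩

lemma csF_SBof {M : List BMStep} {K : ℕ} (hK : K ≤ M.length) :
    csF (SBof M) K = (M.take K).countP pB := by
  rw [countP_eq_card (M.take K) pB, csF]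
  have hlen : (M.take K).length = K := by
    rw [List.length_take]; omega
  rw [hlen]
  congr 1
  ext k
  simp only [SBof, Finset.mem_filter, Finset.mem_range]
  constructor
  · rintro ⟨⟨hkl, hp⟩, hkK⟩
    exact ⟨hkK, by rwa [getD_take _ _ hkK]⟩
  · rintro ⟨hkK, hp⟩
    exact ⟨⟨by omega, by rwa [getD_take _ _ hkK] at hp⟩, hkK⟩

lemma hgt_eq_cs {M : List BMStep} {K : ℕ} (hK : K ≤ M.length) :
    hgt M K = (csF (SFof M) K : ℤ) - csF (SBof M) K := by
  rw [hgt_eq_countP, csF_SFof hK, csF_SBof hK]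
/-! ### forward direction: `pathOf` satisfies all the path conditions -/

section Forward

variable {m n : ℕ} {q : (ℕ → ℕ) × (ℕ → ℕ)} (hq : Pred m n q)

lemma G_le (hq : Pred m n q) : ∀ a, q.2 a ≤ n := by
  intro a
  rcases le_or_gt m a with h | h
  · exact (hq.2.2.2.1 a h).2.le
  · calc q.2 a ≤ q.2 m := hq.2.1 h.le
    _ = n := (hq.2.2.2.1 m le_rfl).2

lemma F_le (hq : Pred m n q) : ∀ a, q.1 a ≤ n := fun a => (hq.2.2.1 a).trans (G_le hq a)

lemma SFof_pathOf (hq : Pred m n q) : SFof (pathOf m n q) = posSet m q.1 := by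
  ext k
  simp only [SFof, Finset.mem_filter, Finset.mem_range, length_pathOf]
  constructor
  · rintro ⟨hk, hp⟩
    rwa [getD_pathOf q hk, pT_stepAt] at hp
  · intro hk
    have hkr : k < m + n := Finset.mem_range.mp (posSet_subset (fun a ha => F_le hq a) hk)
    exact ⟨hkr, by rwa [getD_pathOf q hkr, pT_stepAt]⟩

lemma SBof_pathOf (hq : Pred m n q) : SBof (pathOf m n q) = posSet m q.2 := by
  ext k
  simp only [SBof, Finset.mem_filter, Finset.mem_range, length_pathOf]
  constructor
  · rintro ⟨hk, hp⟩
    rwa [getD_pathOf q hk, pB_stepAt] at hp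
  · intro hk
    have hkr : k < m + n := Finset.mem_range.mp (posSet_subset (fun a ha => G_le hq a) hk)
    exact ⟨hkr, by rwa [getD_pathOf q hkr, pB_stepAt]⟩

lemma hgt_pathOf (hq : Pred m n q) {K : ℕ} (hK : K ≤ m + n) :
    hgt (pathOf m n q) K =
      (((Finset.range m).filter fun a => a + q.1 a < K).card : ℤ) -
      ((Finset.range m).filter fun a => a + q.2 a < K).card := by
  rw [hgt_eq_cs (by rw [length_pathOf]; exact hK), SFof_pathOf hq, SBof_pathOf hq,
    csF_posSet_eq hq.1, csF_posSet_eq hq.2.1]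

lemma filter_G_subset_F (q : (ℕ → ℕ) × (ℕ → ℕ)) (hFG : ∀ a, q.1 a ≤ q.2 a) (K : ℕ) :
    ((Finset.range m).filter fun a => a + q.2 a < K) ⊆
    ((Finset.range m).filter fun a => a + q.1 a < K) := by
  intro a ha
  simp only [Finset.mem_filter] at *
  exact ⟨ha.1, by have := hFG a; omega⟩

lemma filter_all_lt (F : ℕ → ℕ) (hFn : ∀ a, a < m → F a ≤ n) :
    ((Finset.range m).filter fun a => a + F a < m + n) = Finset.range m := by
  apply Finset.filter_true_of_mem
  intro a ha
  rw [Finset.mem_range] at ha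
  have := hFn a ha
  omega

lemma isBMPath_pathOf (hq : Pred m n q) : IsBMPath (pathOf m n q) := by
  constructor
  · intro K
    rcases le_or_gt K (m + n) with hK | hK
    · rw [hgt_pathOf hq hK]
      have := Finset.card_le_card ((filter_G_subset_F (m := m) q hq.2.2.1 K))
      omega
    · have : pathOf m n q = (pathOf m n q).take K :=
        (List.take_of_length_le (by rw [length_pathOf]; omega)).symm
      rw [hgt, ← this, ← List.take_length (l := pathOf m n q), ← hgt, length_pathOf,
        hgt_pathOf hq le_rfl]
      have := Finset.card_le_card ((filter_G_subset_F (m := m) q hq.2.2.1 (m + n)))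
      omega
  · rw [length_pathOf, hgt_pathOf hq le_rfl,
      filter_all_lt q.1 (fun a _ => F_le hq a), filter_all_lt q.2 (fun a _ => G_le hq a)]
    ring

lemma counts_pathOf (hq : Pred m n q) :
    (pathOf m n q).count .u + (pathOf m n q).count .h1 = m ∧
    (pathOf m n q).count .d + (pathOf m n q).count .h2 = n := by
  have h1 : (pathOf m n q).count .u + (pathOf m n q).count .h1 = m := by
    rw [← countP_pT_eq, ← card_SFof, SFof_pathOf hq, card_posSet hq.1]
  refine ⟨h1, ?_⟩
  have h2 := length_eq_counts (pathOf m n q)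
  rw [length_pathOf] at h2
  have h3 : (pathOf m n q).count .d + (pathOf m n q).count .h1 =
      (pathOf m n q).countP pB := (countP_pB_eq _).symm
  rw [← card_SBof, SBof_pathOf hq, card_posSet hq.2.1] at h3
  omega

lemma noH2ThenH1_pathOf (hq : Pred m n q) : NoH2ThenH1 (pathOf m n q) := by
  rintro K ⟨hh, hK, hK1⟩
  -- step K is h2, step K+1 is h1
  have hKlt : K < m + n := by
    by_contra h
    rw [List.getElem?_eq_none (by rw [length_pathOf]; omega)] at hK
    cases hK
  have hK1lt : K + 1 < m + n := by
    by_contra h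
    rw [List.getElem?_eq_none (by rw [length_pathOf]; omega)] at hK1
    cases hK1
  rw [get?_pathOf q hKlt] at hK
  rw [get?_pathOf q hK1lt] at hK1
  have hsK : stepAt m q K = .h2 := by injection hK
  have hsK1 : stepAt m q (K+1) = .h1 := by injection hK1
  have hKF : K ∉ posSet m q.1 := by
    rw [← pT_stepAt q K, hsK]; simp [pT]
  have hKG : K ∉ posSet m q.2 := by
    rw [← pB_stepAt q K, hsK]; simp [pB]
  have hK1F : K + 1 ∈ posSet m q.1 := by
    rw [← pT_stepAt q (K+1), hsK1]; simp [pT]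
  have hK1G : K + 1 ∈ posSet m q.2 := by
    rw [← pB_stepAt q (K+1), hsK1]; simp [pB]
  obtain ⟨c, hc, hcpos⟩ := mem_posSet.mp hK1G
  obtain ⟨c', hc', hc'pos⟩ := mem_posSet.mp hK1F
  -- the filters at K are range c and range c'
  have hfilG : ((Finset.range m).filter fun a => a + q.2 a < K) = Finset.range c := by
    ext a
    simp only [Finset.mem_filter, Finset.mem_range]
    constructor
    · rintro ⟨ham, hlt⟩
      by_contra h
      push_neg at h
      have : c + q.2 c ≤ a + q.2 a := by
        rcases eq_or_lt_of_le h with rfl | h'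
        · exact le_rfl
        · exact (pos_strictMono hq.2.1 h').le
      omega
    · intro hac
      have h1 : a + q.2 a < c + q.2 c := pos_strictMono hq.2.1 hac
      refine ⟨by omega, ?_⟩
      rcases lt_or_eq_of_le (by omega : a + q.2 a ≤ K) with h | h
      · exact h
      · exact absurd (mem_posSet.mpr ⟨a, by omega, h⟩) hKG
  have hfilF : ((Finset.range m).filter fun a => a + q.1 a < K) = Finset.range c' := by
    ext a
    simp only [Finset.mem_filter, Finset.mem_range]
    constructor
    · rintro ⟨ham, hlt⟩
      by_contra h
      push_neg at h
      have : c' + q.1 c' ≤ a + q.1 a := by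
        rcases eq_or_lt_of_le h with rfl | h'
        · exact le_rfl
        · exact (pos_strictMono hq.1 h').le
      omega
    · intro hac
      have h1 : a + q.1 a < c' + q.1 c' := pos_strictMono hq.1 hac
      refine ⟨by omega, ?_⟩
      rcases lt_or_eq_of_le (by omega : a + q.1 a ≤ K) with h | h
      · exact h
      · exact absurd (mem_posSet.mpr ⟨a, by omega, h⟩) hKF
  have hcc' : c = c' := by
    have := hgt_pathOf hq (le_of_lt hKlt)
    rw [hh] at this
    rw [hfilG, hfilF] at this
    simp only [Finset.card_range] at this
    omega
  subst hcc'
  have hFGc : q.1 c = q.2 c := by omega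
  rcases Nat.eq_zero_or_pos c with rfl | hcpos'
  · have : q.2 0 = 0 := hq.2.2.2.2.1 (by omega) hFGc
    omega
  · obtain ⟨b, rfl⟩ := Nat.exists_eq_add_of_lt hcpos'
    rw [zero_add] at *
    have hGb : q.2 (b + 1) = q.2 b := hq.2.2.2.2.2 b hc hFGc
    have : b + q.2 b = K := by omega
    exact hKG (mem_posSet.mpr ⟨b, by omega, this⟩)
end Forward
/-! ### reconstruction: from a restricted path back to a pair of monotone functions -/

def PathCond (m n : ℕ) (M : List BMStep) : Prop :=
  IsBMPath M ∧ NoH2ThenH1 M ∧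
    M.count BMStep.u + M.count BMStep.h1 = m ∧
    M.count BMStep.d + M.count BMStep.h2 = n

lemma get?_eq_getD {M : List BMStep} {K : ℕ} (hK : K < M.length) :
    M[K]? = some (M.getD K .h2) := by
  rw [List.getD_eq_getElem?_getD]
  cases h : M[K]? with
  | none => exact absurd (List.getElem?_eq_none_iff.mp h) (by omega)
  | some x => rfl

lemma step_h2_of {M : List BMStep} {K : ℕ} (hK : K < M.length)
    (h1 : pT (M.getD K .h2) = false) (h2 : pB (M.getD K .h2) = false) :
    M[K]? = some .h2 := by
  rw [get?_eq_getD hK]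
  rcases h : M.getD K .h2 <;> rw [h] at h1 h2 <;> simp [pT, pB] at h1 h2 ⊢

lemma step_h1_of {M : List BMStep} {K : ℕ} (hK : K < M.length)
    (h1 : pT (M.getD K .h2) = true) (h2 : pB (M.getD K .h2) = true) :
    M[K]? = some .h1 := by
  rw [get?_eq_getD hK]
  rcases h : M.getD K .h2 <;> rw [h] at h1 h2 <;> simp [pT, pB] at h1 h2 ⊢

lemma csF_posSet_count {m : ℕ} {F : ℕ → ℕ} (hF : Monotone F) {c K : ℕ} (hc : c ≤ m)
    (hlow : ∀ a, a < c → a + F a < K) (hhigh : ∀ a, c ≤ a → a < m → K ≤ a + F a) :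
    csF (posSet m F) K = c := by
  rw [csF_posSet_eq hF]
  have : ((Finset.range m).filter fun a => a + F a < K) = Finset.range c := by
    ext a
    simp only [Finset.mem_filter, Finset.mem_range]
    constructor
    · rintro ⟨ham, hlt⟩
      by_contra h
      push_neg at h
      exact absurd hlt (not_lt.mpr (hhigh a h ham))
    · intro hac
      exact ⟨lt_of_lt_of_le hac hc, hlow a hac⟩
  rw [this, Finset.card_range]

section Reconstruct

variable {m n : ℕ} {M : List BMStep}

lemma len_M (hM : PathCond m n M) : M.length = m + n := by
  obtain ⟨⟨_, hend⟩, _, hcu, hcd⟩ := hM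
  have h1 : hgt M M.length = (M.countP pT : ℤ) - (M.countP pB : ℤ) := by
    rw [hgt_eq_countP, List.take_of_length_le le_rfl]
  rw [hend, countP_pT_eq, countP_pB_eq] at h1
  have h2 := length_eq_counts M
  omega

lemma card_SF_M (hM : PathCond m n M) : (SFof M).card = m := by
  rw [card_SFof, countP_pT_eq]
  exact hM.2.2.1

lemma card_SB_M (hM : PathCond m n M) : (SBof M).card = m := by
  obtain ⟨⟨_, hend⟩, _, hcu, hcd⟩ := hM
  have h1 : hgt M M.length = (M.countP pT : ℤ) - (M.countP pB : ℤ) := by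
    rw [hgt_eq_countP, List.take_of_length_le le_rfl]
  rw [hend, countP_pT_eq, countP_pB_eq] at h1
  rw [card_SBof, countP_pB_eq]
  omega

lemma SF_sub (hM : PathCond m n M) : SFof M ⊆ Finset.range (m + n) := by
  rw [← len_M hM]
  exact Finset.filter_subset _ _

lemma SB_sub (hM : PathCond m n M) : SBof M ⊆ Finset.range (m + n) := by
  rw [← len_M hM]
  exact Finset.filter_subset _ _

/-- reconstructed pair of monotone functions -/
def recQ (m n : ℕ) (M : List BMStep) : (ℕ → ℕ) × (ℕ → ℕ) :=
  (fSF (m + n) (SFof M), fSF (m + n) (SBof M))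

lemma recQ_SF (hM : PathCond m n M) :
    posSet m (fSF (m + n) (SFof M)) = SFof M := posSet_fSF _ _ _ (SF_sub hM) (card_SF_M hM)

lemma recQ_SB (hM : PathCond m n M) :
    posSet m (fSF (m + n) (SBof M)) = SBof M := posSet_fSF _ _ _ (SB_sub hM) (card_SB_M hM)

lemma mem_SFof_iff {K : ℕ} (hK : K < M.length) :
    K ∈ SFof M ↔ pT (M.getD K .h2) = true := by
  simp only [SFof, Finset.mem_filter, Finset.mem_range]
  exact ⟨fun h => h.2, fun h => ⟨hK, h⟩⟩

lemma mem_SBof_iff {K : ℕ} (hK : K < M.length) :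
    K ∈ SBof M ↔ pB (M.getD K .h2) = true := by
  simp only [SBof, Finset.mem_filter, Finset.mem_range]
  exact ⟨fun h => h.2, fun h => ⟨hK, h⟩⟩

lemma recQ_FleG (hM : PathCond m n M) : ∀ a, (recQ m n M).1 a ≤ (recQ m n M).2 a := by
  intro a
  show fSF (m + n) (SFof M) a ≤ fSF (m + n) (SBof M) a
  rcases le_or_gt m a with h | h
  · rw [fSF_of_le _ _ (SF_sub hM) _ (by rw [card_SF_M hM]; exact h),
      fSF_of_le _ _ (SB_sub hM) _ (by rw [card_SB_M hM]; exact h)]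
    rw [card_SF_M hM, card_SB_M hM]
  · by_contra hcon
    push_neg at hcon
    have hjB : a + (fSF (m + n) (SBof M)) a ∈ SBof M ∧ csF (SBof M) (a + (fSF (m + n) (SBof M)) a) = a :=
      csF_posSet _ m (SBof M) (SB_sub hM) (card_SB_M hM) h
    have hjlen : a + (fSF (m + n) (SBof M)) a < M.length := by
      have := SB_sub hM hjB.1
      rw [len_M hM]
      exact Finset.mem_range.mp this
    have hcsB : csF (SBof M) (a + (fSF (m + n) (SBof M)) a + 1) = a + 1 := by
      rw [csF_succ_of_mem _ hjB.1, hjB.2]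
    have hgtpos := hM.1.1 (a + (fSF (m + n) (SBof M)) a + 1)
    rw [hgt_eq_cs (by omega)] at hgtpos
    have hcsF : csF (SFof M) (a + (fSF (m + n) (SBof M)) a + 1) ≤ a := by
      have hFa : csF (SFof M) (a + (fSF (m + n) (SFof M)) a) = a :=
        (csF_posSet _ m (SFof M) (SF_sub hM) (card_SF_M hM) h).2
      calc csF (SFof M) (a + (fSF (m + n) (SBof M)) a + 1) ≤ csF (SFof M) (a + (fSF (m + n) (SFof M)) a) :=
            csF_mono _ (by omega)
      _ = a := hFa
    omega

lemma pred_recQ (hM : PathCond m n M) : Pred m n (recQ m n M) := by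
  obtain ⟨hBM, hNo, hcu, hcd⟩ := hM
  have hMc : PathCond m n M := ⟨hBM, hNo, hcu, hcd⟩
  refine ⟨fSF_mono (m + n) (SFof M), fSF_mono (m + n) (SBof M), recQ_FleG hMc, ?_, ?_, ?_⟩
  · intro a ha
    constructor
    · show fSF (m + n) (SFof M) a = n
      rw [fSF_of_le _ _ (SF_sub hMc) _ (by rw [card_SF_M hMc]; exact ha),
        card_SF_M hMc]
      omega
    · show fSF (m + n) (SBof M) a = n
      rw [fSF_of_le _ _ (SB_sub hMc) _ (by rw [card_SB_M hMc]; exact ha),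
        card_SB_M hMc]
      omega
  · -- star at 0
    intro hm h0
    by_contra hv
    simp only [recQ] at h0 hv ⊢
    have hv1 : 1 ≤ (fSF (m + n) (SBof M)) 0 := by omega
    set K := (fSF (m + n) (SBof M)) 0 - 1 with hK
    have hK1 : K + 1 = 0 + (fSF (m + n) (SBof M)) 0 := by omega
    have hK1B : K + 1 ∈ SBof M := by
      have h9 : 0 + (fSF (m + n) (SBof M)) 0 ∈ posSet m (fSF (m + n) (SBof M)) :=
        mem_posSet.mpr ⟨0, hm, rfl⟩
      rw [recQ_SB hMc] at h9
      rw [hK1]; exact h9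
    have hK1F : K + 1 ∈ SFof M := by
      have h9 : 0 + (fSF (m + n) (SFof M)) 0 ∈ posSet m (fSF (m + n) (SFof M)) :=
        mem_posSet.mpr ⟨0, hm, rfl⟩
      rw [recQ_SF hMc] at h9
      have : K + 1 = 0 + (fSF (m + n) (SFof M)) 0 := by omega
      rw [this]; exact h9
    have hK1len : K + 1 < M.length := by
      have := SB_sub hMc hK1B
      rw [len_M hMc]
      exact Finset.mem_range.mp this
    have hlowB : ∀ j ∈ SBof M, K + 1 ≤ j := by
      intro j hj
      rw [← recQ_SB hMc, mem_posSet] at hj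
      obtain ⟨a, ha, rfl⟩ := hj
      have : (fSF (m + n) (SBof M)) 0 ≤ (fSF (m + n) (SBof M)) a := fSF_mono _ _ (Nat.zero_le a)
      omega
    have hlowF : ∀ j ∈ SFof M, K + 1 ≤ j := by
      intro j hj
      rw [← recQ_SF hMc, mem_posSet] at hj
      obtain ⟨a, ha, rfl⟩ := hj
      have : (fSF (m + n) (SFof M)) 0 ≤ (fSF (m + n) (SFof M)) a := fSF_mono _ _ (Nat.zero_le a)
      omega
    have hcsB : csF (SBof M) K = 0 := by
      rw [csF, Finset.card_eq_zero, Finset.filter_eq_empty_iff]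
      intro j hj
      have := hlowB j hj
      omega
    have hcsF : csF (SFof M) K = 0 := by
      rw [csF, Finset.card_eq_zero, Finset.filter_eq_empty_iff]
      intro j hj
      have := hlowF j hj
      omega
    refine hNo K ⟨?_, ?_, ?_⟩
    · rw [hgt_eq_cs (by omega), hcsB, hcsF]
      ring
    · refine step_h2_of (by omega) ?_ ?_
      · rw [← Bool.not_eq_true, ← mem_SFof_iff (by omega)]
        intro hmem
        have := hlowF K hmem
        omega
      · rw [← Bool.not_eq_true, ← mem_SBof_iff (by omega)]
        intro hmem
        have := hlowB K hmem
        omega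
    · exact step_h1_of hK1len ((mem_SFof_iff hK1len).mp hK1F)
        ((mem_SBof_iff hK1len).mp hK1B)
  · -- star at successors
    intro b hb hFG
    by_contra hv
    simp only [recQ] at hFG hv ⊢
    have hmono : (fSF (m + n) (SBof M)) b ≤ (fSF (m + n) (SBof M)) (b+1) := fSF_mono _ _ (Nat.le_succ b)
    have hlt : (fSF (m + n) (SBof M)) b < (fSF (m + n) (SBof M)) (b+1) := lt_of_le_of_ne hmono (fun h => hv h.symm)
    set K := b + (fSF (m + n) (SBof M)) (b+1) with hK
    have hK1 : K + 1 = (b+1) + (fSF (m + n) (SBof M)) (b+1) := by omega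
    have hK1B : K + 1 ∈ SBof M := by
      have h9 : (b+1) + (fSF (m + n) (SBof M)) (b+1) ∈ posSet m (fSF (m + n) (SBof M)) :=
        mem_posSet.mpr ⟨b+1, hb, rfl⟩
      rw [recQ_SB hMc] at h9
      rw [hK1]; exact h9
    have hK1F : K + 1 ∈ SFof M := by
      have h9 : (b+1) + (fSF (m + n) (SFof M)) (b+1) ∈ posSet m (fSF (m + n) (SFof M)) :=
        mem_posSet.mpr ⟨b+1, hb, rfl⟩
      rw [recQ_SF hMc] at h9
      have : K + 1 = (b+1) + (fSF (m + n) (SFof M)) (b+1) := by omega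
      rw [this]; exact h9
    have hK1len : K + 1 < M.length := by
      have := SB_sub hMc hK1B
      rw [len_M hMc]
      exact Finset.mem_range.mp this
    have hsplitB : ∀ j ∈ SBof M, j < K ∨ K + 1 ≤ j := by
      intro j hj
      rw [← recQ_SB hMc, mem_posSet] at hj
      obtain ⟨a, ha, rfl⟩ := hj
      rcases le_or_gt a b with h' | h'
      · left
        have : (fSF (m + n) (SBof M)) a ≤ (fSF (m + n) (SBof M)) b := fSF_mono _ _ h'
        omega
      · right
        have : (fSF (m + n) (SBof M)) (b+1) ≤ (fSF (m + n) (SBof M)) a := fSF_mono _ _ h'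
        omega
    have hsplitF : ∀ j ∈ SFof M, j < K ∨ K + 1 ≤ j := by
      intro j hj
      rw [← recQ_SF hMc, mem_posSet] at hj
      obtain ⟨a, ha, rfl⟩ := hj
      rcases le_or_gt a b with h' | h'
      · left
        have h1 : (fSF (m + n) (SFof M)) a ≤ (fSF (m + n) (SFof M)) b := fSF_mono _ _ h'
        have h2 : (fSF (m + n) (SFof M)) b ≤ (fSF (m + n) (SBof M)) b := recQ_FleG hMc b
        omega
      · right
        have : (fSF (m + n) (SFof M)) (b+1) ≤ (fSF (m + n) (SFof M)) a := fSF_mono _ _ h'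
        omega
    have hcsB : csF (SBof M) K = b + 1 := by
      rw [← recQ_SB hMc]
      apply csF_posSet_count (fSF_mono _ _) (by omega)
      · intro a ha
        have : (fSF (m + n) (SBof M)) a ≤ (fSF (m + n) (SBof M)) b := fSF_mono _ _ (by omega)
        omega
      · intro a ha _
        have : (fSF (m + n) (SBof M)) (b+1) ≤ (fSF (m + n) (SBof M)) a := fSF_mono _ _ ha
        omega
    have hcsF : csF (SFof M) K = b + 1 := by
      have hFGle : (fSF (m + n) (SFof M)) b ≤ (fSF (m + n) (SBof M)) b := recQ_FleG hMc b
      rw [← recQ_SF hMc]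
      apply csF_posSet_count (fSF_mono _ _) (by omega)
      · intro a ha
        have h1 : (fSF (m + n) (SFof M)) a ≤ (fSF (m + n) (SFof M)) b := fSF_mono _ _ (by omega)
        omega
      · intro a ha _
        have : (fSF (m + n) (SFof M)) (b+1) ≤ (fSF (m + n) (SFof M)) a := fSF_mono _ _ ha
        omega
    refine hNo K ⟨?_, ?_, ?_⟩
    · rw [hgt_eq_cs (by omega), hcsB, hcsF]
      ring
    · refine step_h2_of (by omega) ?_ ?_
      · rw [← Bool.not_eq_true, ← mem_SFof_iff (by omega)]
        intro hmem
        rcases hsplitF K hmem with h | h <;> omega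
      · rw [← Bool.not_eq_true, ← mem_SBof_iff (by omega)]
        intro hmem
        rcases hsplitB K hmem with h | h <;> omega
    · exact step_h1_of hK1len ((mem_SFof_iff hK1len).mp hK1F)
        ((mem_SBof_iff hK1len).mp hK1B)

lemma pathOf_recQ (hM : PathCond m n M) : pathOf m n (recQ m n M) = M := by
  apply List.ext_getElem?
  intro k
  rcases lt_or_ge k (m + n) with hk | hk
  · rw [get?_pathOf _ hk, get?_eq_getD (by rw [len_M hM]; exact hk)]
    congr 1
    have hkl : k < M.length := by rw [len_M hM]; exact hk
    have hF : (k ∈ posSet m (fSF (m + n) (SFof M))) = (pT (M.getD k .h2) = true) := by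
      rw [recQ_SF hM, mem_SFof_iff hkl]
    have hB : (k ∈ posSet m (fSF (m + n) (SBof M))) = (pB (M.getD k .h2) = true) := by
      rw [recQ_SB hM, mem_SBof_iff hkl]
    rcases h : M.getD k .h2 <;> rw [h] at hF hB <;>
      simp only [pT, pB] at hF hB <;> simp at hF hB <;> simp [stepAt, recQ, hF, hB]
  · rw [List.getElem?_eq_none (by rw [length_pathOf]; exact hk),
      List.getElem?_eq_none (by rw [len_M hM]; exact hk)]

end Reconstruct
/-! ### the equivalence between pairs and restricted paths -/

section EquivP

variable {m n : ℕ}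

lemma recQ_pathOf {q : (ℕ → ℕ) × (ℕ → ℕ)} (hq : Pred m n q) :
    recQ m n (pathOf m n q) = q := by
  have hF1 : fSF (m + n) (posSet m q.1) = q.1 := by
    funext a
    rcases lt_or_ge a m with ha | ha
    · refine monotone_posSet_eq m (fSF_mono _ _) hq.1 ?_ a ha
      rw [posSet_fSF (m + n) m (posSet m q.1)
        (posSet_subset (fun b _ => F_le hq b)) (card_posSet hq.1)]
      rfl
    · rw [fSF_of_le _ _ (posSet_subset (fun b _ => F_le hq b)) _
        (by rw [card_posSet hq.1]; exact ha), card_posSet hq.1,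
        (hq.2.2.2.1 a ha).1]
      omega
  have hF2 : fSF (m + n) (posSet m q.2) = q.2 := by
    funext a
    rcases lt_or_ge a m with ha | ha
    · refine monotone_posSet_eq m (fSF_mono _ _) hq.2.1 ?_ a ha
      rw [posSet_fSF (m + n) m (posSet m q.2)
        (posSet_subset (fun b _ => G_le hq b)) (card_posSet hq.2.1)]
      rfl
    · rw [fSF_of_le _ _ (posSet_subset (fun b _ => G_le hq b)) _
        (by rw [card_posSet hq.2.1]; exact ha), card_posSet hq.2.1,
        (hq.2.2.2.1 a ha).2]
      omega
  have e1 : SFof (pathOf m n q) = posSet m q.1 := SFof_pathOf hq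
  have e2 : SBof (pathOf m n q) = posSet m q.2 := SBof_pathOf hq
  rw [recQ, e1, e2, hF1, hF2]

def equivP (m n : ℕ) : {q : (ℕ → ℕ) × (ℕ → ℕ) // Pred m n q} ≃
    {M : List BMStep // PathCond m n M} where
  toFun q := ⟨pathOf m n q.1,
    isBMPath_pathOf q.2, noH2ThenH1_pathOf q.2,
    (counts_pathOf q.2).1, (counts_pathOf q.2).2⟩
  invFun Mc := ⟨recQ m n Mc.1, pred_recQ Mc.2⟩
  left_inv q := Subtype.ext (recQ_pathOf q.2)
  right_inv Mc := Subtype.ext (pathOf_recQ Mc.2)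

end EquivP
/-! ### from interval-closed sets to pairs of monotone functions -/

section ICSside

variable {m n : ℕ}

/-- values in the column of `I` whose reversed index is `a` (actual column `m-1-a`). -/
def colS (I : Finset (Fin m × Fin n)) (a : ℕ) : Finset ℕ :=
  (I.filter (fun x => (x.1 : ℕ) + a + 1 = m)).image (fun x => (x.2 : ℕ))

lemma mem_colS {I : Finset (Fin m × Fin n)} {a b : ℕ} :
    b ∈ colS I a ↔ ∃ x, x ∈ I ∧ (x.1 : ℕ) + a + 1 = m ∧ (x.2 : ℕ) = b := by
  simp only [colS, Finset.mem_image, Finset.mem_filter]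
  tauto

lemma colS_lt_n {I : Finset (Fin m × Fin n)} {a b : ℕ} (hb : b ∈ colS I a) : b < n := by
  obtain ⟨x, _, _, rfl⟩ := mem_colS.mp hb
  exact x.2.isLt

/-- the `G` function of an interval-closed set, defined by downward propagation. -/
def gOf (I : Finset (Fin m × Fin n)) : ℕ → ℕ
  | 0 => if h : (colS I 0).Nonempty then (colS I 0).max' h + 1 else 0
  | a+1 => if h : (colS I (a+1)).Nonempty then (colS I (a+1)).max' h + 1 else gOf I a

lemma gOf_of_nonempty {I : Finset (Fin m × Fin n)} {a : ℕ} (h : (colS I a).Nonempty) :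
    gOf I a = (colS I a).max' h + 1 := by
  cases a <;> simp [gOf, h]

lemma gOf_of_empty_succ {I : Finset (Fin m × Fin n)} {a : ℕ} (h : ¬(colS I (a+1)).Nonempty) :
    gOf I (a+1) = gOf I a := by
  simp [gOf, h]

lemma gOf_of_empty_zero {I : Finset (Fin m × Fin n)} (h : ¬(colS I 0).Nonempty) :
    gOf I 0 = 0 := by
  simp [gOf, h]

/-- the pair of functions associated to an interval-closed set. -/
def fg (I : Finset (Fin m × Fin n)) : (ℕ → ℕ) × (ℕ → ℕ) :=
  (fun a => if a < m then
      (if h : (colS I a).Nonempty then (colS I a).min' h else gOf I a) else n,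
   fun a => if a < m then gOf I a else n)

section Exchange

variable {I : Finset (Fin m × Fin n)} (hI : IsIntervalClosed I)

lemma exch_max (hI : IsIntervalClosed I) {a1 a2 : ℕ} (ha : a1 ≤ a2)
    (h1 : (colS I a1).Nonempty) (h2 : (colS I a2).Nonempty) :
    (colS I a1).max' h1 ≤ (colS I a2).max' h2 := by
  by_contra hcon
  push_neg at hcon
  obtain ⟨x1, hx1I, hx1c, hx1v⟩ := mem_colS.mp ((colS I a1).max'_mem h1)
  obtain ⟨x2, hx2I, hx2c, hx2v⟩ := mem_colS.mp ((colS I a2).max'_mem h2)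
  rcases eq_or_lt_of_le ha with rfl | hlt
  · have : (colS I a1).max' h1 = (colS I a1).max' h2 := rfl
    omega
  · -- z = (x2.1, x1.2)
    have hj : (x2.1 : ℕ) < (x1.1 : ℕ) := by omega
    have hz1 : x2 < (x2.1, x1.2) :=
      Prod.lt_iff.mpr (Or.inr ⟨le_rfl,
        Fin.lt_def.mpr (show ((x2.2 : ℕ) : ℕ) < ((x1.2 : ℕ) : ℕ) by omega)⟩)
    have hz2 : (x2.1, x1.2) < x1 :=
      Prod.lt_iff.mpr (Or.inl ⟨Fin.lt_def.mpr (show ((x2.1 : ℕ) : ℕ) < ((x1.1 : ℕ) : ℕ) by omega), le_rfl⟩)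
    have hzI := hI x2 hx2I x1 hx1I _ hz1 hz2
    have : (x1.2 : ℕ) ∈ colS I a2 := mem_colS.mpr ⟨(x2.1, x1.2), hzI, by simpa using hx2c, rfl⟩
    have := (colS I a2).le_max' _ this
    omega

lemma exch_min (hI : IsIntervalClosed I) {a1 a2 : ℕ} (ha : a1 ≤ a2)
    (h1 : (colS I a1).Nonempty) (h2 : (colS I a2).Nonempty) :
    (colS I a1).min' h1 ≤ (colS I a2).min' h2 := by
  by_contra hcon
  push_neg at hcon
  obtain ⟨x1, hx1I, hx1c, hx1v⟩ := mem_colS.mp ((colS I a1).min'_mem h1)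
  obtain ⟨x2, hx2I, hx2c, hx2v⟩ := mem_colS.mp ((colS I a2).min'_mem h2)
  rcases eq_or_lt_of_le ha with rfl | hlt
  · have : (colS I a1).min' h1 = (colS I a1).min' h2 := rfl
    omega
  · -- z = (x1.1, x2.2)
    have hj : (x2.1 : ℕ) < (x1.1 : ℕ) := by omega
    have hz1 : x2 < (x1.1, x2.2) :=
      Prod.lt_iff.mpr (Or.inl ⟨Fin.lt_def.mpr (show ((x2.1 : ℕ) : ℕ) < ((x1.1 : ℕ) : ℕ) by omega), le_rfl⟩)
    have hz2 : (x1.1, x2.2) < x1 :=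
      Prod.lt_iff.mpr (Or.inr ⟨le_rfl,
        Fin.lt_def.mpr (show ((x2.2 : ℕ) : ℕ) < ((x1.2 : ℕ) : ℕ) by omega)⟩)
    have hzI := hI x2 hx2I x1 hx1I _ hz1 hz2
    have : (x2.2 : ℕ) ∈ colS I a1 := mem_colS.mpr ⟨(x1.1, x2.2), hzI, by simpa using hx1c, rfl⟩
    have := (colS I a1).min'_le _ this
    omega

lemma gap_lemma (hI : IsIntervalClosed I) {a' a : ℕ} (hlt : a' < a)
    (h1 : (colS I a').Nonempty) (h2 : (colS I (a+1)).Nonempty)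
    (hemp : ¬(colS I a).Nonempty) :
    (colS I a').max' h1 < (colS I (a+1)).min' h2 := by
  by_contra hcon
  push_neg at hcon
  obtain ⟨y, hyI, hyc, hyv⟩ := mem_colS.mp ((colS I a').max'_mem h1)
  obtain ⟨x, hxI, hxc, hxv⟩ := mem_colS.mp ((colS I (a+1)).min'_mem h2)
  have hx1m : (x.1 : ℕ) + 1 < m := by omega
  set z : Fin m × Fin n := (⟨(x.1 : ℕ) + 1, hx1m⟩, x.2) with hz
  have hz1 : x < z :=
    Prod.lt_iff.mpr (Or.inl ⟨Fin.lt_def.mpr (by simp [hz]), le_rfl⟩)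
  have hz2 : z < y :=
    Prod.lt_iff.mpr (Or.inl ⟨Fin.lt_def.mpr (by simp [hz]; omega), Fin.le_def.mpr (by simp [hz]; omega)⟩)
  have hzI := hI x hxI y hyI z hz1 hz2
  exact hemp ⟨(z.2 : ℕ), mem_colS.mpr ⟨z, hzI, by simp [hz]; omega, rfl⟩⟩

end Exchange
section GOf

variable {m n : ℕ} {I : Finset (Fin m × Fin n)}

lemma gOf_char (I : Finset (Fin m × Fin n)) : ∀ a : ℕ,
    (gOf I a = 0 ∧ ∀ t ≤ a, ¬(colS I t).Nonempty) ∨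
    ∃ a' ≤ a, ∃ h : (colS I a').Nonempty,
      gOf I a = (colS I a').max' h + 1 ∧ ∀ t, a' < t → t ≤ a → ¬(colS I t).Nonempty := by
  intro a
  induction a with
  | zero =>
    by_cases h : (colS I 0).Nonempty
    · right
      exact ⟨0, le_rfl, h, gOf_of_nonempty h, fun t ht ht' => by omega⟩
    · left
      exact ⟨gOf_of_empty_zero h, fun t ht => by rw [Nat.le_zero.mp ht]; exact h⟩
  | succ a ih =>
    by_cases h : (colS I (a+1)).Nonempty
    · right
      exact ⟨a+1, le_rfl, h, gOf_of_nonempty h, fun t ht ht' => by omega⟩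
    · rcases ih with ⟨h0, hall⟩ | ⟨a', ha', hne, heq, hgap⟩
      · left
        refine ⟨by rw [gOf_of_empty_succ h]; exact h0, fun t ht => ?_⟩
        rcases Nat.lt_succ_iff_lt_or_eq.mp (Nat.lt_succ_of_le ht) with h' | h'
        · exact hall t (by omega)
        · rw [h']; exact h
      · right
        refine ⟨a', by omega, hne, by rw [gOf_of_empty_succ h]; exact heq, fun t ht ht' => ?_⟩
        rcases Nat.lt_succ_iff_lt_or_eq.mp (Nat.lt_succ_of_le ht') with h' | h'
        · exact hgap t ht (by omega)
        · rw [h']; exact h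

lemma gOf_mono (hI : IsIntervalClosed I) : Monotone (gOf I) := by
  apply monotone_nat_of_le_succ
  intro a
  by_cases h : (colS I (a+1)).Nonempty
  · rw [gOf_of_nonempty h]
    rcases gOf_char I a with ⟨h0, _⟩ | ⟨a', ha', hne, heq, _⟩
    · omega
    · rw [heq]
      have := exch_max hI (by omega : a' ≤ a + 1) hne h
      omega
  · rw [gOf_of_empty_succ h]

lemma gOf_le_n (I : Finset (Fin m × Fin n)) (a : ℕ) : gOf I a ≤ n := by
  induction a with
  | zero =>
    by_cases h : (colS I 0).Nonempty
    · rw [gOf_of_nonempty h]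
      have := colS_lt_n ((colS I 0).max'_mem h)
      omega
    · rw [gOf_of_empty_zero h]; omega
  | succ a ih =>
    by_cases h : (colS I (a+1)).Nonempty
    · rw [gOf_of_nonempty h]
      have := colS_lt_n ((colS I (a+1)).max'_mem h)
      omega
    · rwa [gOf_of_empty_succ h]

lemma min'_lt_gOf {a : ℕ} (h : (colS I a).Nonempty) :
    (colS I a).min' h < gOf I a := by
  rw [gOf_of_nonempty h]
  have := (colS I a).min'_le _ ((colS I a).max'_mem h)
  omega

lemma pred_fg (hI : IsIntervalClosed I) : Pred m n (fg I) := by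
  have hG : ∀ a, (fg I).2 a = if a < m then gOf I a else n := fun a => rfl
  have hF : ∀ a, (fg I).1 a = if a < m then
      (if h : (colS I a).Nonempty then (colS I a).min' h else gOf I a) else n := fun a => rfl
  refine ⟨?_, ?_, ?_, ?_, ?_, ?_⟩
  · -- Monotone F
    apply monotone_nat_of_le_succ
    intro a
    rw [hF, hF]
    rcases lt_or_ge (a+1) m with ham | ham
    · rw [if_pos (by omega), if_pos ham]
      by_cases he : (colS I a).Nonempty
      · rw [dif_pos he]
        by_cases he' : (colS I (a+1)).Nonempty
        · rw [dif_pos he']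
          exact exch_min hI (by omega) he he'
        · rw [dif_neg he', gOf_of_empty_succ he']
          have := min'_lt_gOf he
          omega
      · rw [dif_neg he]
        by_cases he' : (colS I (a+1)).Nonempty
        · rw [dif_pos he']
          rcases gOf_char I a with ⟨h0, _⟩ | ⟨a', ha', hne, heq, hgap⟩
          · omega
          · have ha'a : a' < a := by
              rcases eq_or_lt_of_le ha' with rfl | h'
              · exact absurd hne he
              · exact h'
            have := gap_lemma hI ha'a hne he' he
            omega
        · rw [dif_neg he', gOf_of_empty_succ he']
    · rw [if_neg (show ¬ (a + 1 < m) by omega)]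
      rcases lt_or_ge a m with ham' | ham'
      · rw [if_pos ham']
        by_cases he : (colS I a).Nonempty
        · rw [dif_pos he]
          have := colS_lt_n ((colS I a).min'_mem he)
          omega
        · rw [dif_neg he]
          exact gOf_le_n I a
      · rw [if_neg (show ¬ (a < m) by omega)]
  · -- Monotone G
    apply monotone_nat_of_le_succ
    intro a
    rw [hG, hG]
    rcases lt_or_ge (a+1) m with ham | ham
    · rw [if_pos (by omega), if_pos ham]
      exact gOf_mono hI (Nat.le_succ a)
    · rw [if_neg (show ¬ (a + 1 < m) by omega)]
      rcases lt_or_ge a m with ham' | ham'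
      · rw [if_pos ham']
        exact gOf_le_n I a
      · rw [if_neg (show ¬ (a < m) by omega)]
  · -- F ≤ G
    intro a
    rw [hF, hG]
    rcases lt_or_ge a m with ham | ham
    · rw [if_pos ham, if_pos ham]
      by_cases he : (colS I a).Nonempty
      · rw [dif_pos he]
        exact (min'_lt_gOf he).le
      · rw [dif_neg he]
    · rw [if_neg (show ¬ (a < m) by omega), if_neg (show ¬ (a < m) by omega)]
  · -- pinning
    intro a ha
    rw [hF, hG, if_neg (show ¬ (a < m) by omega), if_neg (show ¬ (a < m) by omega)]
    exact ⟨rfl, rfl⟩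
  · -- star at 0
    intro hm h0
    rw [hF, hG, if_pos hm, if_pos hm] at h0
    rw [hG, if_pos hm]
    by_cases he : (colS I 0).Nonempty
    · rw [dif_pos he] at h0
      have := min'_lt_gOf he
      omega
    · exact gOf_of_empty_zero he
  · -- star at successor
    intro a ha hFG
    rw [hF, hG, if_pos ha, if_pos ha] at hFG
    rw [hG, hG, if_pos ha, if_pos (by omega)]
    by_cases he : (colS I (a+1)).Nonempty
    · rw [dif_pos he] at hFG
      have := min'_lt_gOf he
      omega
    · exact gOf_of_empty_succ he

end GOf
def toA (m n : ℕ) (q : (ℕ → ℕ) × (ℕ → ℕ)) : Finset (Fin m × Fin n) :=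
  Finset.univ.filter (fun x => q.1 (m - 1 - (x.1 : ℕ)) ≤ (x.2 : ℕ) ∧
    (x.2 : ℕ) < q.2 (m - 1 - (x.1 : ℕ)))

section ToA

variable {m n : ℕ} {q : (ℕ → ℕ) × (ℕ → ℕ)}

lemma mem_toA {x : Fin m × Fin n} :
    x ∈ toA m n q ↔ q.1 (m - 1 - (x.1 : ℕ)) ≤ (x.2 : ℕ) ∧
      (x.2 : ℕ) < q.2 (m - 1 - (x.1 : ℕ)) := by
  simp [toA]

lemma ics_toA (hF : Monotone q.1) (hG : Monotone q.2) : IsIntervalClosed (toA m n q) := by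
  intro x hx y hy z hxz hzy
  rw [mem_toA] at hx hy ⊢
  have hxz' : (x.1 : ℕ) ≤ z.1 ∧ (x.2 : ℕ) ≤ z.2 := by
    have := le_of_lt hxz
    rw [Prod.le_def] at this
    exact ⟨Fin.le_def.mp this.1, Fin.le_def.mp this.2⟩
  have hzy' : (z.1 : ℕ) ≤ y.1 ∧ (z.2 : ℕ) ≤ y.2 := by
    have := le_of_lt hzy
    rw [Prod.le_def] at this
    exact ⟨Fin.le_def.mp this.1, Fin.le_def.mp this.2⟩
  constructor
  · calc q.1 (m - 1 - (z.1 : ℕ)) ≤ q.1 (m - 1 - (x.1 : ℕ)) :=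
          hF (by omega)
    _ ≤ (x.2 : ℕ) := hx.1
    _ ≤ (z.2 : ℕ) := hxz'.2
  · calc (z.2 : ℕ) ≤ (y.2 : ℕ) := hzy'.2
    _ < q.2 (m - 1 - (y.1 : ℕ)) := hy.2
    _ ≤ q.2 (m - 1 - (z.1 : ℕ)) := hG (by omega)

lemma colS_toA (hq : Pred m n q) {a : ℕ} (ha : a < m) :
    colS (toA m n q) a = Finset.Ico (q.1 a) (q.2 a) := by
  ext b
  rw [mem_colS, Finset.mem_Ico]
  constructor
  · rintro ⟨x, hx, hcol, rfl⟩
    rw [mem_toA] at hx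
    have hxa : m - 1 - (x.1 : ℕ) = a := by omega
    rw [hxa] at hx
    exact hx
  · rintro ⟨h1, h2⟩
    have hbn : b < n := lt_of_lt_of_le h2 (G_le hq a)
    refine ⟨(⟨m - a - 1, by omega⟩, ⟨b, hbn⟩), ?_, by simp; omega, rfl⟩
    rw [mem_toA]
    have : m - 1 - ((⟨m - a - 1, by omega⟩ : Fin m) : ℕ) = a := by simp; omega
    rw [this]
    exact ⟨h1, h2⟩

lemma max'_Ico {lo hi : ℕ} (h : (Finset.Ico lo hi).Nonempty) :
    (Finset.Ico lo hi).max' h = hi - 1 := by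
  have hlt : lo < hi := by
    obtain ⟨b, hb⟩ := h
    rw [Finset.mem_Ico] at hb
    omega
  apply le_antisymm
  · apply Finset.max'_le
    intro b hb
    rw [Finset.mem_Ico] at hb
    omega
  · apply Finset.le_max'
    rw [Finset.mem_Ico]
    omega

lemma min'_Ico {lo hi : ℕ} (h : (Finset.Ico lo hi).Nonempty) :
    (Finset.Ico lo hi).min' h = lo := by
  have hlt : lo < hi := by
    obtain ⟨b, hb⟩ := h
    rw [Finset.mem_Ico] at hb
    omega
  apply le_antisymm
  · apply Finset.min'_le
    rw [Finset.mem_Ico]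
    omega
  · apply Finset.le_min'
    intro b hb
    rw [Finset.mem_Ico] at hb
    omega

lemma gOf_toA (hq : Pred m n q) : ∀ a, a < m → gOf (toA m n q) a = q.2 a := by
  intro a
  induction a with
  | zero =>
    intro ha
    by_cases he : (colS (toA m n q) 0).Nonempty
    · rw [gOf_of_nonempty he]
      have hne := he
      rw [colS_toA hq ha] at hne
      have hlt : q.1 0 < q.2 0 := Finset.nonempty_Ico.mp hne
      have : (colS (toA m n q) 0).max' he = q.2 0 - 1 := by
        rw [show (colS (toA m n q) 0).max' he =
          (Finset.Ico (q.1 0) (q.2 0)).max' hne by congr 1 <;> rw [colS_toA hq ha]]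
        exact max'_Ico hne
      omega
    · rw [gOf_of_empty_zero he]
      rw [colS_toA hq ha, Finset.nonempty_Ico] at he
      have hFG : q.1 0 = q.2 0 := le_antisymm (hq.2.2.1 0) (by omega)
      exact (hq.2.2.2.2.1 ha hFG).symm
  | succ a ih =>
    intro ha
    by_cases he : (colS (toA m n q) (a+1)).Nonempty
    · rw [gOf_of_nonempty he]
      have hne := he
      rw [colS_toA hq ha] at hne
      have hlt : q.1 (a+1) < q.2 (a+1) := Finset.nonempty_Ico.mp hne
      have : (colS (toA m n q) (a+1)).max' he = q.2 (a+1) - 1 := by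
        rw [show (colS (toA m n q) (a+1)).max' he =
          (Finset.Ico (q.1 (a+1)) (q.2 (a+1))).max' hne by congr 1 <;> rw [colS_toA hq ha]]
        exact max'_Ico hne
      omega
    · rw [gOf_of_empty_succ he, ih (by omega)]
      rw [colS_toA hq ha, Finset.nonempty_Ico] at he
      have hFG : q.1 (a+1) = q.2 (a+1) := le_antisymm (hq.2.2.1 (a+1)) (by omega)
      exact (hq.2.2.2.2.2 a ha hFG).symm

lemma fg_toA (hq : Pred m n q) : fg (toA m n q) = q := by
  have h2 : (fg (toA m n q)).2 = q.2 := by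
    funext a
    show (if a < m then gOf (toA m n q) a else n) = q.2 a
    rcases lt_or_ge a m with ha | ha
    · rw [if_pos ha]
      exact gOf_toA hq a ha
    · rw [if_neg (by omega), (hq.2.2.2.1 a ha).2]
  have h1 : (fg (toA m n q)).1 = q.1 := by
    funext a
    show (if a < m then (if h : (colS (toA m n q) a).Nonempty
        then (colS (toA m n q) a).min' h else gOf (toA m n q) a) else n) = q.1 a
    rcases lt_or_ge a m with ha | ha
    · rw [if_pos ha]
      by_cases he : (colS (toA m n q) a).Nonempty
      · rw [dif_pos he]
        have hne := he
        rw [colS_toA hq ha] at hne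
        rw [show (colS (toA m n q) a).min' he =
          (Finset.Ico (q.1 a) (q.2 a)).min' hne by congr 1 <;> rw [colS_toA hq ha]]
        exact min'_Ico hne
      · rw [dif_neg he, gOf_toA hq a ha]
        rw [colS_toA hq ha, Finset.nonempty_Ico] at he
        exact le_antisymm (by omega) (hq.2.2.1 a)
    · rw [if_neg (by omega), (hq.2.2.2.1 a ha).1]
  exact Prod.ext h1 h2

end ToA

section RT1

variable {m n : ℕ} {I : Finset (Fin m × Fin n)}

lemma toA_fg (hI : IsIntervalClosed I) : toA m n (fg I) = I := by
  ext x
  rw [mem_toA]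
  have hx1 : (x.1 : ℕ) < m := x.1.isLt
  set a := m - 1 - (x.1 : ℕ) with hadef
  have ham : a < m := by omega
  have hcol : (x.1 : ℕ) + a + 1 = m := by omega
  have hFa : (fg I).1 a = (if h : (colS I a).Nonempty then (colS I a).min' h else gOf I a) := by
    show (if a < m then _ else n) = _
    rw [if_pos ham]
  have hGa : (fg I).2 a = gOf I a := by
    show (if a < m then gOf I a else n) = _
    rw [if_pos ham]
  rw [hFa, hGa]
  constructor
  · rintro ⟨h1, h2⟩
    by_cases he : (colS I a).Nonempty
    · rw [dif_pos he] at h1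
      rw [gOf_of_nonempty he] at h2
      obtain ⟨x1, hx1I, hx1c, hx1v⟩ := mem_colS.mp ((colS I a).min'_mem he)
      obtain ⟨x2, hx2I, hx2c, hx2v⟩ := mem_colS.mp ((colS I a).max'_mem he)
      have he1 : x1.1 = x.1 := Fin.ext (by omega)
      have he2 : x2.1 = x.1 := Fin.ext (by omega)
      rcases eq_or_lt_of_le h1 with heq | hlt1
      · have : x = x1 := by
          apply Prod.ext he1.symm
          apply Fin.ext
          omega
        rw [this]; exact hx1I
      · rcases eq_or_lt_of_le (show (x.2 : ℕ) ≤ (colS I a).max' he by omega) with heq | hlt2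
        · have : x = x2 := by
            apply Prod.ext he2.symm
            apply Fin.ext
            omega
          rw [this]; exact hx2I
        · refine hI x1 hx1I x2 hx2I x ?_ ?_
          · exact Prod.lt_iff.mpr (Or.inr ⟨le_of_eq he1,
              Fin.lt_def.mpr (show ((x1.2 : ℕ) : ℕ) < ((x.2 : ℕ) : ℕ) by omega)⟩)
          · exact Prod.lt_iff.mpr (Or.inr ⟨le_of_eq he2.symm,
              Fin.lt_def.mpr (show ((x.2 : ℕ) : ℕ) < ((x2.2 : ℕ) : ℕ) by omega)⟩)
    · rw [dif_neg he] at h1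
      omega
  · intro hxI
    have hb : (x.2 : ℕ) ∈ colS I a := mem_colS.mpr ⟨x, hxI, hcol, rfl⟩
    have he : (colS I a).Nonempty := ⟨_, hb⟩
    rw [dif_pos he, gOf_of_nonempty he]
    have := (colS I a).min'_le _ hb
    have := (colS I a).le_max' _ hb
    omega

lemma card_toA (hq : Pred m n q) :
    (toA m n q).card = ∑ a ∈ Finset.range m, (q.2 a - q.1 a) := by
  rw [Finset.card_eq_sum_card_fiberwise
    (f := fun x : Fin m × Fin n => m - 1 - (x.1 : ℕ)) (t := Finset.range m)
    (fun x _ => Finset.mem_range.mpr (show m - 1 - (x.1 : ℕ) < m by have := x.1.isLt; omega))]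
  apply Finset.sum_congr rfl
  intro a ha
  rw [Finset.mem_range] at ha
  have hfe : (toA m n q).filter (fun x => m - 1 - (x.1 : ℕ) = a) =
      (toA m n q).filter (fun x => (x.1 : ℕ) + a + 1 = m) := by
    apply Finset.filter_congr
    intro x _
    have := x.1.isLt
    constructor
    · intro h; omega
    · intro h; omega
  rw [hfe]
  have hinj : ((toA m n q).filter (fun x => (x.1 : ℕ) + a + 1 = m)).card =
      (colS (toA m n q) a).card := by
    rw [colS, eq_comm]
    apply Finset.card_image_of_injOn
    intro x hx y hy hxy
    rw [Finset.mem_coe, Finset.mem_filter] at hx hy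
    apply Prod.ext
    · apply Fin.ext; omega
    · apply Fin.ext; exact hxy
  rw [hinj, colS_toA hq ha, Nat.card_Ico]

end RT1
/-! ### area computation and final assembly -/

section Area

variable {m n : ℕ}

lemma count_ge (N t : ℕ) (h : t ≤ N) :
    ((Finset.range N).filter (fun K => t ≤ K)).card = N - t := by
  have : (Finset.range N).filter (fun K => t ≤ K) = Finset.range N \ Finset.range t := by
    ext k
    simp only [Finset.mem_filter, Finset.mem_sdiff, Finset.mem_range]
    omega
  rw [this, Finset.card_sdiff_of_subset (Finset.range_subset_range.mpr h), Finset.card_range,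
    Finset.card_range]

lemma sum_cF (F : ℕ → ℕ) (hFn : ∀ a, a < m → F a ≤ n) :
    ∑ K ∈ Finset.range (m + n),
        ((Finset.range m).filter (fun a => a + F a < K + 1)).card =
      ∑ a ∈ Finset.range m, (m + n - (a + F a)) := by
  have h1 : ∀ K, ((Finset.range m).filter (fun a => a + F a < K + 1)).card =
      ∑ a ∈ Finset.range m, if a + F a < K + 1 then 1 else 0 := fun K =>
    Finset.card_filter _ _
  calc ∑ K ∈ Finset.range (m + n),
        ((Finset.range m).filter (fun a => a + F a < K + 1)).card
      = ∑ K ∈ Finset.range (m + n), ∑ a ∈ Finset.range m,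
          if a + F a < K + 1 then 1 else 0 := Finset.sum_congr rfl (fun K _ => h1 K)
    _ = ∑ a ∈ Finset.range m, ∑ K ∈ Finset.range (m + n),
          if a + F a < K + 1 then 1 else 0 := Finset.sum_comm
    _ = ∑ a ∈ Finset.range m, (m + n - (a + F a)) := by
        apply Finset.sum_congr rfl
        intro a ha
        rw [Finset.mem_range] at ha
        have hb : a + F a ≤ m + n := by
          have := hFn a ha
          omega
        rw [← count_ge (m + n) (a + F a) hb, Finset.card_filter]
        apply Finset.sum_congr rfl
        intro K _
        congr 1
        simp only [eq_iff_iff]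
        omega

lemma area_pathOf {q : (ℕ → ℕ) × (ℕ → ℕ)} (hq : Pred m n q) :
    ∑ K ∈ Finset.range (m + n), hgt (pathOf m n q) (K + 1) =
      ∑ a ∈ Finset.range m, ((q.2 a : ℤ) - q.1 a) := by
  have h1 : ∀ K ∈ Finset.range (m + n), hgt (pathOf m n q) (K + 1) =
      (((Finset.range m).filter (fun a => a + q.1 a < K + 1)).card : ℤ) -
      ((Finset.range m).filter (fun a => a + q.2 a < K + 1)).card := by
    intro K hK
    rw [Finset.mem_range] at hK
    exact hgt_pathOf hq (by omega)
  rw [Finset.sum_congr rfl h1, Finset.sum_sub_distrib, ← Nat.cast_sum, ← Nat.cast_sum,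
    sum_cF q.1 (fun a _ => F_le hq a), sum_cF q.2 (fun a _ => G_le hq a),
    Nat.cast_sum, Nat.cast_sum, ← Finset.sum_sub_distrib]
  apply Finset.sum_congr rfl
  intro a ha
  rw [Finset.mem_range] at ha
  have hFa := F_le hq a
  have hGa := G_le hq a
  rw [Nat.cast_sub (by omega), Nat.cast_sub (by omega)]
  push_cast
  ring

end Area

def equivA (m n : ℕ) :
    {I : Finset (Fin m × Fin n) // IsIntervalClosed I} ≃
      {q : (ℕ → ℕ) × (ℕ → ℕ) // Pred m n q} where
  toFun I := ⟨fg I.1, pred_fg I.2⟩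
  invFun qc := ⟨toA m n qc.1, ics_toA qc.2.1 qc.2.2.1⟩
  left_inv I := Subtype.ext (toA_fg I.2)
  right_inv qc := Subtype.ext (fg_toA qc.2)

end ICSside

theorem ics_card_eq_motzkin_area' (m n : ℕ) :
    ∃ e : {I : Finset (Fin m × Fin n) // IsIntervalClosed I} ≃
        {M : List BMStep // IsBMPath M ∧ NoH2ThenH1 M ∧
          M.count BMStep.u + M.count BMStep.h1 = m ∧
          M.count BMStep.d + M.count BMStep.h2 = n},
      ∀ I : {I : Finset (Fin m × Fin n) // IsIntervalClosed I},
        (I.1.card : ℤ) = ∑ k ∈ Finset.range (e I).1.length, hgt (e I).1 (k + 1) := by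
  refine ⟨(equivA m n).trans (equivP m n), ?_⟩
  intro I
  have hPred : Pred m n (fg I.1) := pred_fg I.2
  show ((I.1.card : ℤ)) = ∑ k ∈ Finset.range (pathOf m n (fg I.1)).length,
    hgt (pathOf m n (fg I.1)) (k + 1)
  rw [length_pathOf, area_pathOf hPred]
  have hcard : I.1.card = ∑ a ∈ Finset.range m, ((fg I.1).2 a - (fg I.1).1 a) := by
    conv_lhs => rw [(toA_fg I.2).symm]
    exact card_toA hPred
  rw [hcard, Nat.cast_sum]
  apply Finset.sum_congr rfl
  intro a _
  rw [Nat.cast_sub (hPred.2.2.1 a)]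

end ICS

/-- Under the bijection between interval-closed sets of `[m]×[n]` and restricted
bicolored Motzkin paths, the cardinality of the interval-closed set equals the
area under the corresponding path and above the x-axis, i.e., the sum over all
steps of the height of the path after that step. -/
theorem ics_card_eq_motzkin_area (m n : ℕ) :
    ∃ e : {I : Finset (Fin m × Fin n) // IsIntervalClosed I} ≃
        {M : List BMStep // IsBMPath M ∧ NoH2ThenH1 M ∧
          M.count BMStep.u + M.count BMStep.h1 = m ∧
          M.count BMStep.d + M.count BMStep.h2 = n},
      ∀ I : {I : Finset (Fin m × Fin n) // IsIntervalClosed I},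
        (I.1.card : ℤ) = ∑ k ∈ Finset.range (e I).1.length, hgt (e I).1 (k + 1) :=
  ICS.ics_card_eq_motzkin_area' m n
end

section
/- There is a bijection between pairs (B, T) of nested Dyck paths of length 2n (B weakly below T, both from (0,0) to (2n,0) never going below the x-axis) and lattice walks in the first quadrant starting and ending at the origin with 2n steps from {(1,0), (−1,0), (1,−1), (−1,1)}, given by mapping the i-th step pair (bᵢ, tᵢ) to: (−1,1) if (d,u); (1,−1) if (u,d); (1,0) if (u,u); (−1,0) if (d,d). -/
/-- Steps of a quarter-plane walk: east `(1,0)`, west `(−1,0)`,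
southeast `(1,−1)`, northwest `(−1,1)`. -/
inductive QStep : Type
  | e : QStep
  | w : QStep
  | se : QStep
  | nw : QStep
  deriving DecidableEq

/-- Horizontal displacement of a step. -/
def QStep.dx : QStep → ℤ
  | .e => 1
  | .w => -1
  | .se => 1
  | .nw => -1

/-- Vertical displacement of a step. -/
def QStep.dy : QStep → ℤ
  | .se => -1
  | .nw => 1
  | _ => 0

/-- x-coordinate of the walk `W` (started at the origin) after `k` steps. -/
def walkX (W : List QStep) (k : ℕ) : ℤ := ((W.take k).map QStep.dx).sum

/-- y-coordinate of the walk `W` after `k` steps. -/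
def walkY (W : List QStep) (k : ℕ) : ℤ := ((W.take k).map QStep.dy).sum

/-- The walk stays in the first quadrant. -/
def InQuadrant (W : List QStep) : Prop :=
  ∀ k : ℕ, 0 ≤ walkX W k ∧ 0 ≤ walkY W k

/-- Height of a path of up (`true`) and down (`false`) steps after `k` steps. -/
def dyckHgt (B : List Bool) (k : ℕ) : ℤ :=
  ((B.take k).map (fun b => if b then (1 : ℤ) else -1)).sum

/-- A Dyck path: never below the x-axis, ending at height 0. -/
def IsDyck (B : List Bool) : Prop :=
  (∀ k : ℕ, 0 ≤ dyckHgt B k) ∧ dyckHgt B B.length = 0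

/-- The step of the walk determined by a pair of steps `(bᵢ, tᵢ)`:
`(d,u) ↦ nw`, `(u,d) ↦ se`, `(u,u) ↦ e`, `(d,d) ↦ w`. -/
def pairStep : Bool → Bool → QStep
  | false, true => QStep.nw
  | true, false => QStep.se
  | true, true => QStep.e
  | false, false => QStep.w

/-!
Reading the pair `(bᵢ, tᵢ)` back off a walk step inverts `pairStep`, so the map is inverted by
`W ↦ (W.map bottom, W.map top)` on pairs of equal length and only the conditions need checking.
Along the walk, the x-coordinate is the height of `B` and `x + 2y` is the height of `T`. Hence
`x ≥ 0` says `B` stays above the axis, `y ≥ 0` says `B ≤ T` (which then keeps `T` above the axis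
as well), and returning to the origin says that both paths end at height `0`.
-/

namespace QStep

def bottom : QStep → Bool
  | .e => true
  | .w => false
  | .se => true
  | .nw => false

def top : QStep → Bool
  | .e => true
  | .w => false
  | .se => false
  | .nw => true

theorem bottom_pairStep (b t : Bool) : (pairStep b t).bottom = b := by
  cases b <;> cases t <;> rfl

theorem top_pairStep (b t : Bool) : (pairStep b t).top = t := by
  cases b <;> cases t <;> rfl

theorem pairStep_bottom_top (s : QStep) : pairStep s.bottom s.top = s := by
  cases s <;> rfl

theorem upDown_bottom (s : QStep) : (if s.bottom then (1 : ℤ) else -1) = s.dx := by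
  cases s <;> rfl

theorem upDown_top (s : QStep) : (if s.top then (1 : ℤ) else -1) = s.dx + 2 * s.dy := by
  cases s <;> rfl

end QStep

open QStep

theorem map_bottom_zipWith_pairStep {B T : List Bool} (h : B.length ≤ T.length) :
    (List.zipWith pairStep B T).map bottom = B := by
  rw [← List.map_uncurry_zip_eq_zipWith, List.map_map,
    show bottom ∘ Function.uncurry pairStep = Prod.fst from funext fun p => bottom_pairStep _ _,
    List.map_fst_zip h]

theorem map_top_zipWith_pairStep {B T : List Bool} (h : T.length ≤ B.length) :
    (List.zipWith pairStep B T).map top = T := by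
  rw [← List.map_uncurry_zip_eq_zipWith, List.map_map,
    show top ∘ Function.uncurry pairStep = Prod.snd from funext fun p => top_pairStep _ _,
    List.map_snd_zip h]

theorem zipWith_pairStep_map_bottom_map_top (W : List QStep) :
    List.zipWith pairStep (W.map bottom) (W.map top) = W := by
  rw [List.zipWith_map, List.zipWith_self]
  simp only [pairStep_bottom_top, List.map_id']

theorem dyckHgt_map_bottom (W : List QStep) (k : ℕ) :
    dyckHgt (W.map bottom) k = walkX W k := by
  simp only [dyckHgt, walkX, ← List.map_take, List.map_map, Function.comp_def, upDown_bottom]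

theorem dyckHgt_map_top (W : List QStep) (k : ℕ) :
    dyckHgt (W.map top) k = walkX W k + 2 * walkY W k := by
  simp only [dyckHgt, walkX, walkY, ← List.map_take, List.map_map, Function.comp_def, upDown_top,
    List.sum_map_add, List.sum_map_mul_left]

def nestedDyckPairs (n : ℕ) : Set (List Bool × List Bool) :=
  {p | p.1.length = 2 * n ∧ p.2.length = 2 * n ∧
    IsDyck p.1 ∧ IsDyck p.2 ∧ ∀ k : ℕ, dyckHgt p.1 k ≤ dyckHgt p.2 k}

def quadrantExcursions (n : ℕ) : Set (List QStep) :=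
  {W | W.length = 2 * n ∧ InQuadrant W ∧ walkX W W.length = 0 ∧ walkY W W.length = 0}

theorem map_bottom_map_top_mem_nestedDyckPairs_iff (n : ℕ) (W : List QStep) :
    (W.map bottom, W.map top) ∈ nestedDyckPairs n ↔ W ∈ quadrantExcursions n := by
  simp only [nestedDyckPairs, quadrantExcursions, IsDyck, InQuadrant, Set.mem_ofPred_eq,
    List.length_map, dyckHgt_map_bottom, dyckHgt_map_top]
  constructor
  · rintro ⟨hlen, -, ⟨hx, hx₀⟩, ⟨-, hxy₀⟩, hle⟩
    refine ⟨hlen, fun k => ⟨hx k, by linarith [hle k]⟩, hx₀, by linarith⟩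
  · rintro ⟨hlen, hquad, hx₀, hy₀⟩
    refine ⟨hlen, hlen, ⟨fun k => (hquad k).1, hx₀⟩,
      ⟨fun k => by linarith [hquad k], by linarith⟩, fun k => by linarith [(hquad k).2]⟩

theorem zipWith_pairStep_bijOn (n : ℕ) :
    Set.BijOn (fun p : List Bool × List Bool => List.zipWith pairStep p.1 p.2)
      (nestedDyckPairs n) (quadrantExcursions n) := by
  have hleft : ∀ p ∈ nestedDyckPairs n,
      ((List.zipWith pairStep p.1 p.2).map bottom, (List.zipWith pairStep p.1 p.2).map top) = p := by
    rintro ⟨B, T⟩ ⟨hB, hT, -⟩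
    rw [map_bottom_zipWith_pairStep (by omega), map_top_zipWith_pairStep (by omega)]
  refine Set.InvOn.bijOn (f' := fun W => (W.map bottom, W.map top))
    ⟨hleft, fun W _ => zipWith_pairStep_map_bottom_map_top W⟩ ?_ ?_
  · intro p hp
    rw [← map_bottom_map_top_mem_nestedDyckPairs_iff, hleft p hp]
    exact hp
  · intro W hW
    exact (map_bottom_map_top_mem_nestedDyckPairs_iff n W).2 hW

/-- The map sending a nested pair `(B, T)` of Dyck paths of length `2n` to the
walk whose `i`-th step is determined by `(bᵢ, tᵢ)` is a bijection onto the
first-quadrant walks of `2n` steps starting and ending at the origin. -/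
theorem nested_dyck_equiv_quarter_plane_walks (n : ℕ) :
    Set.BijOn (fun p : List Bool × List Bool => List.zipWith pairStep p.1 p.2)
      {p : List Bool × List Bool | p.1.length = 2 * n ∧ p.2.length = 2 * n ∧
        IsDyck p.1 ∧ IsDyck p.2 ∧ ∀ k : ℕ, dyckHgt p.1 k ≤ dyckHgt p.2 k}
      {W : List QStep | W.length = 2 * n ∧ InQuadrant W ∧
        walkX W W.length = 0 ∧ walkY W W.length = 0} :=
  zipWith_pairStep_bijOn n
end
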